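/- arXiv:2512.07008 — 6 statements merged into one kernel-verified Lean document; each statement's English description precedes it below -/
import Mathlib

section
/- For n ≥ 3, the total number of symmetric valleys over all Catalan words of length n equals (3n-2)·C_{n-1} − (1/2)·∑_{k=1}^{n} C(2k,k). -/
/-!
Deleting the letters `(a-1)^ℓ a` of a symmetric valley `a (a-1)^ℓ a` leaves a Catalan word of
length `n - 1 - ℓ` with a marked letter `a ≥ 2`, and every such marked word arises from exactly
one valley. In a Catalan word of length `m`, cutting at a letter `1` splits it into two Catalan
words of total length `m`, so there are `C_{m+1} - C_m` marked `1`s (the first-return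
decomposition gives `#{Catalan words of length m} = C_m`) and `(m + 1) C_m - C_{m+1}` marked
letters `≥ 2`. The sum of these over `m < n - 1` matches the closed form by induction on `n`, using
`(2k choose k) = (k + 1) C_k` and `(m + 2) C_{m+1} = (4m + 2) C_m`.
-/

def IsCatalanWord (w : List ℕ) : Prop :=
  (∀ x ∈ w, 0 < x) ∧ (0 < w.length → w.getD 0 0 = 1) ∧
    ∀ i, i + 1 < w.length → w.getD (i + 1) 0 ≤ w.getD i 0 + 1

open Finset

theorem isCatalanWord_iff_isChain {w : List ℕ} :
    IsCatalanWord w ↔ (∀ x ∈ w, 0 < x) ∧ (0 :: w).IsChain (fun x y => y ≤ x + 1) := by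
  rw [List.isChain_cons, List.isChain_iff_getElem]
  cases w with
  | nil => simp [IsCatalanWord]
  | cons a t =>
    simp only [IsCatalanWord, List.getD_eq_getElem?_getD]
    constructor
    · rintro ⟨hpos, hhead, hstep⟩
      refine ⟨hpos, by simp at hhead ⊢; omega, fun i hi => ?_⟩
      simpa [List.getElem?_eq_getElem hi, List.getElem?_eq_getElem (Nat.lt_of_succ_lt hi)]
        using hstep i hi
    · rintro ⟨hpos, hhead, hstep⟩
      have ha := hpos a List.mem_cons_self
      refine ⟨hpos, fun _ => by simp at hhead ⊢; omega, fun i hi => ?_⟩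
      simpa [List.getElem?_eq_getElem hi, List.getElem?_eq_getElem (Nat.lt_of_succ_lt hi)]
        using hstep i hi

theorem IsCatalanWord.head?_eq_one {w : List ℕ} (hw : IsCatalanWord w) :
    ∀ x ∈ w.head?, x = 1 := by
  cases w with
  | nil => simp
  | cons a t => simpa using hw.2.1

theorem isCatalanWord_append {u v : List ℕ} (hv : ∀ x ∈ v.head?, x = 1) :
    IsCatalanWord (u ++ v) ↔ IsCatalanWord u ∧ IsCatalanWord v := by
  simp only [isCatalanWord_iff_isChain, ← List.cons_append, List.isChain_append (l₁ := 0 :: u),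
    List.isChain_cons (l := v), List.mem_append]
  grind

theorem isCatalanWord_append_singleton {w : List ℕ} {b : ℕ} :
    IsCatalanWord (w ++ [b]) ↔ IsCatalanWord w ∧ 0 < b ∧ b ≤ w.getLastD 0 + 1 := by
  simp only [isCatalanWord_iff_isChain, ← List.cons_append, List.isChain_append (l₁ := 0 :: w),
    List.mem_append, List.getLast?_cons, List.getLastD_eq_getLast?]
  simp [or_imp, forall_and]
  tauto

theorem isCatalanWord_one_cons_map_succ {v : List ℕ} (hv : ∀ x ∈ v, 0 < x) :
    IsCatalanWord (1 :: v.map (· + 1)) ↔ IsCatalanWord v := by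
  have hshift : 1 :: v.map (· + 1) = (0 :: v).map (· + 1) := rfl
  rw [isCatalanWord_iff_isChain, isCatalanWord_iff_isChain, List.isChain_cons_cons, hshift,
    List.isChain_map]
  simpa using fun _ => hv

theorem isCatalanWord_one_cons_map_succ_append {v u : List ℕ} (hv : ∀ x ∈ v, 0 < x)
    (hu : ∀ x ∈ u.head?, x = 1) :
    IsCatalanWord (1 :: (v.map (· + 1) ++ u)) ↔ IsCatalanWord v ∧ IsCatalanWord u := by
  rw [← List.cons_append, isCatalanWord_append hu, isCatalanWord_one_cons_map_succ hv]

theorem isCatalanWord_insert_valley {u v : List ℕ} {a ℓ : ℕ} (ha : 2 ≤ a) :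
    IsCatalanWord (u ++ a :: (List.replicate ℓ (a - 1) ++ a :: v)) ↔
      IsCatalanWord (u ++ a :: v) := by
  have hvalley : (a :: (List.replicate ℓ (a - 1) ++ [a])).IsChain (fun x y => y ≤ x + 1) := by
    rw [← List.cons_append, List.isChain_append, List.isChain_cons]
    cases ℓ <;> simp [List.isChain_replicate_of_rel, List.head?_replicate, List.getLast?_cons,
      List.getLast?_replicate]
    omega
  simp only [isCatalanWord_iff_isChain]
  rw [List.isChain_cons_split, List.isChain_cons_split (l₁ := List.replicate ℓ (a - 1)),
    List.isChain_cons_split (l₂ := v)]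
  simp only [hvalley, true_and, List.mem_append, List.mem_cons, List.mem_replicate]
  grind

theorem take_drop_eq_cons_iff {α : Type*} {w q : List α} {a : α} {i : ℕ} :
    (w.drop i).take (q.length + 1) = a :: q ↔ ∃ u v, w = u ++ a :: (q ++ v) ∧ u.length = i := by
  constructor
  · intro h
    have hlen : i + (q.length + 1) ≤ w.length := by
      have := congrArg List.length h
      simp at this
      omega
    refine ⟨w.take i, w.drop (i + (q.length + 1)), ?_, by simp; omega⟩
    rw [← List.cons_append, ← h, ← List.drop_drop, List.take_append_drop, List.take_append_drop]
  · rintro ⟨u, v, rfl, rfl⟩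
    simp

theorem takeWhile_map_succ_append {v u : List ℕ} (hv : ∀ x ∈ v, 0 < x)
    (hu : ∀ x ∈ u.head?, x = 1) :
    (v.map (· + 1) ++ u).takeWhile (2 ≤ ·) = v.map (· + 1) := by
  rw [List.takeWhile_append_of_pos
    (by simpa [Nat.one_le_iff_ne_zero, Nat.pos_iff_ne_zero] using hv)]
  cases u with
  | nil => simp
  | cons a u => simp [hu a rfl]

/-- The first-return decomposition: `v` is the block before the first return to the letter `1`. -/
theorem exists_eq_one_cons_map_succ_append {w : List ℕ} (hw : IsCatalanWord w) (hne : w ≠ []) :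
    ∃ v u : List ℕ, w = 1 :: (v.map (· + 1) ++ u) ∧ (∀ x ∈ v, 0 < x) ∧ ∀ x ∈ u.head?, x = 1 := by
  obtain ⟨a, t, rfl⟩ := List.exists_cons_of_ne_nil hne
  have ha : a = 1 := hw.head?_eq_one a rfl
  have hmap : ((t.takeWhile (2 ≤ ·)).map (· - 1)).map (· + 1) = t.takeWhile (2 ≤ ·) := by
    rw [List.map_map]
    refine (List.map_congr_left fun x hx => ?_).trans (List.map_id _)
    have := List.mem_takeWhile_imp hx
    simp at this ⊢
    omega
  refine ⟨(t.takeWhile (2 ≤ ·)).map (· - 1), t.dropWhile (2 ≤ ·), ?_, ?_, ?_⟩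
  · rw [hmap, List.takeWhile_append_dropWhile, ha]
  · simp only [List.mem_map]
    rintro _ ⟨x, hx, rfl⟩
    have := List.mem_takeWhile_imp hx
    simp at this
    omega
  · intro x hx
    have hstop := List.head?_dropWhile_not (2 ≤ ·) t
    rw [hx] at hstop
    have hxt : x ∈ t := (List.dropWhile_suffix _).subset (List.mem_of_mem_head? hx)
    have hpos := hw.1 x (List.mem_cons_of_mem a hxt)
    simp at hstop
    omega

def catalanWords : ℕ → Finset (List ℕ)
  | 0 => {[]}
  | n + 1 => (catalanWords n).biUnion fun w => (Icc 1 (w.getLastD 0 + 1)).image (w ++ [·])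

theorem mem_catalanWords {n : ℕ} {w : List ℕ} :
    w ∈ catalanWords n ↔ IsCatalanWord w ∧ w.length = n := by
  induction n generalizing w with
  | zero =>
    rw [catalanWords, Finset.mem_singleton, List.length_eq_zero_iff]
    exact ⟨fun h => ⟨h ▸ by simp [IsCatalanWord], h⟩, And.right⟩
  | succ n ih =>
    simp only [catalanWords, mem_biUnion, mem_image, mem_Icc, ih]
    constructor
    · rintro ⟨v, ⟨hv, rfl⟩, b, hb, rfl⟩
      exact ⟨isCatalanWord_append_singleton.2 ⟨hv, hb⟩, by simp⟩
    · rintro ⟨hw, hlen⟩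
      obtain ⟨v, b, rfl⟩ : ∃ v b, w = v ++ [b] :=
        ⟨w.dropLast, w.getLast (List.ne_nil_of_length_pos (by omega)),
          (List.dropLast_append_getLast _).symm⟩
      rw [isCatalanWord_append_singleton] at hw
      exact ⟨v, ⟨hw.1, by simpa using hlen⟩, b, hw.2, rfl⟩

theorem disjoint_catalanWords {m n : ℕ} (h : m ≠ n) :
    Disjoint (catalanWords m) (catalanWords n) :=
  Finset.disjoint_left.2 fun _ hm hn =>
    h ((mem_catalanWords.1 hm).2.symm.trans (mem_catalanWords.1 hn).2)

def catalanPairs (m : ℕ) : Finset (List ℕ × List ℕ) :=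
  (antidiagonal m).biUnion fun ij => catalanWords ij.1 ×ˢ catalanWords ij.2

theorem mem_catalanPairs {m : ℕ} {u v : List ℕ} :
    (u, v) ∈ catalanPairs m ↔ IsCatalanWord u ∧ IsCatalanWord v ∧ u.length + v.length = m := by
  simp only [catalanPairs, mem_biUnion, HasAntidiagonal.mem_antidiagonal, Finset.mem_product,
    mem_catalanWords]
  constructor
  · rintro ⟨⟨i, j⟩, rfl, ⟨hu, rfl⟩, hv, rfl⟩
    exact ⟨hu, hv, rfl⟩
  · rintro ⟨hu, hv, rfl⟩
    exact ⟨(u.length, v.length), rfl, ⟨hu, rfl⟩, hv, rfl⟩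

theorem card_catalanPairs (m : ℕ) :
    #(catalanPairs m) = ∑ ij ∈ antidiagonal m, #(catalanWords ij.1) * #(catalanWords ij.2) := by
  rw [catalanPairs, card_biUnion]
  · simp only [card_product]
  · intro ij hij kl hkl hne
    refine disjoint_product.2 (.inl (disjoint_catalanWords fun h => hne ?_))
    rw [mem_coe, HasAntidiagonal.mem_antidiagonal] at hij hkl
    ext <;> omega

theorem catalanWords_succ (m : ℕ) :
    catalanWords (m + 1) = (catalanPairs m).image fun p => 1 :: (p.1.map (· + 1) ++ p.2) := by
  ext w
  simp only [mem_image, Prod.exists, mem_catalanPairs, mem_catalanWords]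
  constructor
  · rintro ⟨hw, hlen⟩
    obtain ⟨v, u, rfl, hv, hu⟩ :=
      exists_eq_one_cons_map_succ_append hw (List.ne_nil_of_length_pos (by omega))
    rw [isCatalanWord_one_cons_map_succ_append hv hu] at hw
    exact ⟨v, u, ⟨hw.1, hw.2, by simpa using hlen⟩, rfl⟩
  · rintro ⟨v, u, ⟨hv, hu, hlen⟩, rfl⟩
    exact ⟨(isCatalanWord_one_cons_map_succ_append hv.1 hu.head?_eq_one).2 ⟨hv, hu⟩,
      by simp [hlen]⟩

theorem card_catalanWords_succ (m : ℕ) : #(catalanWords (m + 1)) = #(catalanPairs m) := by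
  rw [catalanWords_succ, card_image_of_injOn]
  rintro ⟨v, u⟩ hvu ⟨v', u'⟩ hvu' h
  simp only [mem_coe, mem_catalanPairs] at hvu hvu'
  simp only [List.cons.injEq, true_and] at h
  have hv : v.map (· + 1) = v'.map (· + 1) := by
    rw [← takeWhile_map_succ_append hvu.1.1 hvu.2.1.head?_eq_one, h,
      takeWhile_map_succ_append hvu'.1.1 hvu'.2.1.head?_eq_one]
  rw [hv, List.append_cancel_left_eq] at h
  rw [List.map_inj_right (fun _ _ => Nat.succ_inj.1)] at hv
  rw [hv, h]

theorem card_catalanWords (n : ℕ) : #(catalanWords n) = catalan n := by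
  induction n using Nat.strong_induction_on with
  | _ n ih =>
    match n with
    | 0 => simp [catalanWords]
    | m + 1 =>
      rw [card_catalanWords_succ, card_catalanPairs, catalan_succ']
      refine sum_congr rfl fun ij hij => ?_
      rw [HasAntidiagonal.mem_antidiagonal] at hij
      rw [ih _ (by omega), ih _ (by omega)]

/-- The marked position may be `m`, one past the end, where `getD` reads the default `1`:
it accounts for the split `w = w ++ []`. -/
theorem card_filter_getD_eq_one (m : ℕ) :
    #((catalanWords m ×ˢ range (m + 1)).filter fun p => p.1.getD p.2 1 = 1) =
      catalan (m + 1) := by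
  have himage : ((catalanWords m ×ˢ range (m + 1)).filter fun p => p.1.getD p.2 1 = 1) =
      (catalanPairs m).image fun p => (p.1 ++ p.2, p.1.length) := by
    ext ⟨w, i⟩
    simp only [mem_filter, Finset.mem_product, mem_range, mem_catalanWords, mem_image,
      Prod.exists, mem_catalanPairs, Prod.mk.injEq]
    constructor
    · rintro ⟨⟨⟨hw, rfl⟩, hi⟩, hone⟩
      have hdrop : ∀ x ∈ (w.drop i).head?, x = 1 := by
        intro x hx
        rw [List.head?_drop] at hx
        rwa [List.getD_eq_getElem?_getD, hx, Option.getD_some] at hone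
      rw [← List.take_append_drop i w, isCatalanWord_append hdrop] at hw
      exact ⟨w.take i, w.drop i, ⟨hw.1, hw.2, by simp; omega⟩, List.take_append_drop i w,
        by simp; omega⟩
    · rintro ⟨u, v, ⟨hu, hv, rfl⟩, rfl, rfl⟩
      refine ⟨⟨⟨(isCatalanWord_append hv.head?_eq_one).2 ⟨hu, hv⟩, by simp⟩, by omega⟩, ?_⟩
      rw [List.getD_append_right _ _ _ _ le_rfl, Nat.sub_self]
      cases v with
      | nil => rfl
      | cons a t => exact hv.head?_eq_one a rfl
  rw [himage, card_image_of_injective, ← card_catalanWords_succ, card_catalanWords]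
  rintro ⟨u, v⟩ ⟨u', v'⟩ h
  obtain ⟨rfl, rfl⟩ := List.append_inj (Prod.mk.inj h).1 (Prod.mk.inj h).2
  rfl

def nonOneMarks (m : ℕ) : Finset (List ℕ × ℕ) :=
  (catalanWords m ×ˢ range (m + 1)).filter fun p => p.1.getD p.2 1 ≠ 1

theorem card_nonOneMarks_add_catalan_succ (m : ℕ) :
    #(nonOneMarks m) + catalan (m + 1) = (m + 1) * catalan m := by
  rw [← card_filter_getD_eq_one, nonOneMarks, add_comm, card_filter_add_card_filter_not,
    card_product, card_range, card_catalanWords, mul_comm]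

theorem mem_nonOneMarks {m i : ℕ} {w : List ℕ} :
    (w, i) ∈ nonOneMarks m ↔ ∃ u a v, w = u ++ a :: v ∧ u.length = i ∧
      IsCatalanWord (u ++ a :: v) ∧ u.length + v.length + 1 = m ∧ 2 ≤ a := by
  simp only [nonOneMarks, mem_filter, Finset.mem_product, mem_range, mem_catalanWords]
  constructor
  · rintro ⟨⟨⟨hw, rfl⟩, -⟩, hne⟩
    have hi : i < w.length := by
      by_contra! h
      exact hne (List.getD_eq_default _ _ h)
    have hsplit : w = w.take i ++ w[i] :: w.drop (i + 1) := by
      rw [← List.drop_eq_getElem_cons hi, List.take_append_drop]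
    rw [List.getD_eq_getElem _ _ hi] at hne
    have hpos := hw.1 _ (List.getElem_mem hi)
    refine ⟨w.take i, w[i], w.drop (i + 1), hsplit, by simp; omega, hsplit ▸ hw, ?_, by omega⟩
    simp; omega
  · rintro ⟨u, a, v, rfl, rfl, hw, rfl, ha⟩
    refine ⟨⟨⟨hw, by simp; omega⟩, by omega⟩, ?_⟩
    rw [List.getD_append_right _ _ _ _ le_rfl, Nat.sub_self]
    simp; omega

def symmetricValleys (n : ℕ) : Set (List ℕ × ℕ × ℕ × ℕ) :=
  {p | IsCatalanWord p.1 ∧ p.1.length = n ∧ 2 ≤ p.2.2.1 ∧ 1 ≤ p.2.2.2 ∧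
    (p.1.drop p.2.1).take (p.2.2.2 + 2) =
      p.2.2.1 :: (List.replicate p.2.2.2 (p.2.2.1 - 1) ++ [p.2.2.1])}

theorem mem_symmetricValleys {n i a ℓ : ℕ} {w : List ℕ} :
    (w, i, a, ℓ) ∈ symmetricValleys n ↔
      ∃ u v, w = u ++ a :: (List.replicate ℓ (a - 1) ++ a :: v) ∧ u.length = i ∧
        IsCatalanWord (u ++ a :: v) ∧ u.length + v.length + ℓ + 2 = n ∧ 2 ≤ a ∧ 1 ≤ ℓ := by
  have hlen : ℓ + 2 = (List.replicate ℓ (a - 1) ++ [a]).length + 1 := by simp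
  simp only [symmetricValleys, Set.mem_ofPred_eq, hlen, take_drop_eq_cons_iff,
    List.append_assoc, List.singleton_append]
  constructor
  · rintro ⟨hw, rfl, ha, hℓ, u, v, rfl, rfl⟩
    exact ⟨u, v, rfl, rfl, (isCatalanWord_insert_valley ha).1 hw, by simp; omega, ha, hℓ⟩
  · rintro ⟨u, v, rfl, rfl, hw, rfl, ha, hℓ⟩
    exact ⟨(isCatalanWord_insert_valley ha).2 hw, by simp; omega, ha, hℓ, u, v, rfl, rfl⟩

def removeValley (p : List ℕ × ℕ × ℕ × ℕ) : List ℕ × ℕ :=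
  (p.1.take p.2.1 ++ (p.1.drop p.2.1).drop (p.2.2.2 + 1), p.2.1)

def insertValley (ℓ : ℕ) (q : List ℕ × ℕ) : List ℕ × ℕ × ℕ × ℕ :=
  let a := q.1.getD q.2 1
  (q.1.take q.2 ++ a :: (List.replicate ℓ (a - 1) ++ q.1.drop q.2), q.2, a, ℓ)

theorem removeValley_append (u v : List ℕ) (a b ℓ : ℕ) :
    removeValley (u ++ a :: (List.replicate ℓ b ++ a :: v), u.length, a, ℓ) =
      (u ++ a :: v, u.length) := by
  simp [removeValley]

theorem insertValley_append (ℓ : ℕ) (u v : List ℕ) (a : ℕ) :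
    insertValley ℓ (u ++ a :: v, u.length) =
      (u ++ a :: (List.replicate ℓ (a - 1) ++ a :: v), u.length, a, ℓ) := by
  simp [insertValley]

theorem bijOn_removeValley (n : ℕ) :
    Set.BijOn removeValley (symmetricValleys n) ((range (n - 1)).biUnion nonOneMarks) := by
  refine Set.InvOn.bijOn (f' := fun q => insertValley (n - 1 - q.1.length) q) ⟨?_, ?_⟩ ?_ ?_
  · rintro ⟨w, i, a, ℓ⟩ hp
    obtain ⟨u, v, rfl, rfl, -, hn, -⟩ := mem_symmetricValleys.1 hp
    have hℓ : n - 1 - (u ++ a :: v).length = ℓ := by simp; omega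
    simp only [removeValley_append, hℓ, insertValley_append]
  · rintro ⟨w, i⟩ hq
    obtain ⟨m, -, hm⟩ := mem_biUnion.1 hq
    obtain ⟨u, a, v, rfl, rfl, -⟩ := mem_nonOneMarks.1 hm
    simp only [insertValley_append, removeValley_append]
  · rintro ⟨w, i, a, ℓ⟩ hp
    obtain ⟨u, v, rfl, rfl, hw, hn, ha, hℓ⟩ := mem_symmetricValleys.1 hp
    rw [removeValley_append, mem_coe, mem_biUnion]
    exact ⟨u.length + v.length + 1, mem_range.2 (by omega),
      mem_nonOneMarks.2 ⟨u, a, v, rfl, rfl, hw, rfl, ha⟩⟩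
  · rintro ⟨w, i⟩ hq
    obtain ⟨m, hm, hq⟩ := mem_biUnion.1 hq
    obtain ⟨u, a, v, rfl, rfl, hw, rfl, ha⟩ := mem_nonOneMarks.1 hq
    rw [mem_range] at hm
    simp only [insertValley_append]
    exact mem_symmetricValleys.2 ⟨u, v, rfl, rfl, hw, by simp; omega, ha, by simp; omega⟩

theorem ncard_symmetricValleys (n : ℕ) :
    (symmetricValleys n).ncard = ∑ m ∈ range (n - 1), #(nonOneMarks m) := by
  rw [(bijOn_removeValley n).ncard_eq, Set.ncard_coe_finset, card_biUnion]
  intro m _ m' _ hne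
  exact (disjoint_product.2 (.inl (disjoint_catalanWords hne))).mono (filter_subset _ _)
    (filter_subset _ _)

theorem add_two_mul_catalan_succ (n : ℕ) :
    (n + 2) * catalan (n + 1) = (4 * n + 2) * catalan n := by
  refine Nat.eq_of_mul_eq_mul_left n.succ_pos ?_
  calc (n + 1) * ((n + 2) * catalan (n + 1)) = (n + 1) * (n + 1).centralBinom := by
        rw [← succ_mul_catalan_eq_centralBinom]
    _ = 2 * (2 * n + 1) * n.centralBinom := Nat.succ_mul_centralBinom_succ n
    _ = (n + 1) * ((4 * n + 2) * catalan n) := by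
        rw [← succ_mul_catalan_eq_centralBinom]; ring

theorem sum_range_succ_mul_catalan_sub_catalan_succ (N : ℕ) :
    ∑ m ∈ range N, ((m + 1) * catalan m - catalan (m + 1) : ℚ) =
      (3 * N + 1) * catalan N - 1 / 2 * ∑ k ∈ Icc 1 (N + 1), ((2 * k).choose k : ℚ) := by
  induction N with
  | zero => norm_num
  | succ N ih =>
    have h₀ : ((N + 2) * catalan (N + 1) : ℚ) = (4 * N + 2) * catalan N := by
      exact_mod_cast add_two_mul_catalan_succ N
    have h₁ : ((N + 3) * catalan (N + 2) : ℚ) = (4 * N + 6) * catalan (N + 1) := by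
      have := congrArg (Nat.cast : ℕ → ℚ) (add_two_mul_catalan_succ (N + 1))
      push_cast at this
      linarith
    have h₂ : ((2 * (N + 2)).choose (N + 2) : ℚ) = (N + 3) * catalan (N + 2) := by
      rw [← Nat.centralBinom_eq_two_mul_choose, ← succ_mul_catalan_eq_centralBinom]
      push_cast; ring
    rw [sum_range_succ, ih, sum_Icc_succ_top (b := N + 1) (by omega), h₂]
    push_cast
    linear_combination 1 / 2 * h₁ - h₀

/-- Total number of symmetric valleys (occurrences of a string a, (a-1)^ℓ, a with
a > 1, ℓ ≥ 1, at some position i) over all Catalan words of length n. -/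
theorem total_symmetric_valleys (n : ℕ) (hn : 3 ≤ n) :
    (Nat.card {p : List ℕ × ℕ × ℕ × ℕ //
        IsCatalanWord p.1 ∧ p.1.length = n ∧
        2 ≤ p.2.2.1 ∧ 1 ≤ p.2.2.2 ∧
        (p.1.drop p.2.1).take (p.2.2.2 + 2) =
          p.2.2.1 :: (List.replicate p.2.2.2 (p.2.2.1 - 1) ++ [p.2.2.1])} : ℚ) =
      (3 * n - 2) * catalan (n - 1) -
        (1 / 2) * ∑ k ∈ Finset.Icc 1 n, ((2 * k).choose k : ℚ) := by
  obtain ⟨N, rfl⟩ : ∃ N, n = N + 1 := ⟨n - 1, by omega⟩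
  have hmarks (m : ℕ) : (#(nonOneMarks m) : ℚ) = (m + 1) * catalan m - catalan (m + 1) := by
    rw [eq_sub_iff_add_eq]
    exact_mod_cast card_nonOneMarks_add_catalan_succ m
  change (Nat.card (symmetricValleys (N + 1)) : ℚ) = _
  rw [Nat.card_coe_set_eq, ncard_symmetricValleys, Nat.add_sub_cancel, Nat.cast_sum,
    sum_congr rfl fun m _ => hmarks m, sum_range_succ_mul_catalan_sub_catalan_succ]
  push_cast
  ring
end

section
/- For n ≥ 3 and 1 ≤ ℓ ≤ n-2, the total number of symmetric ℓ-peaks over all Catalan words of length n equals C(2n-2ℓ-2, n-ℓ-2). -/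
theorem List.exists_eq_append_of_take_drop_eq {α : Type*} {w p : List α} {i : ℕ} (hp : p ≠ [])
    (h : (w.drop i).take p.length = p) : ∃ A C, w = A ++ p ++ C ∧ A.length = i := by
  have hi : i ≤ w.length := by
    have hlen := congrArg List.length h
    have := List.length_pos_iff.2 hp
    simp only [List.length_take, List.length_drop] at hlen
    omega
  refine ⟨w.take i, w.drop (i + p.length), ?_, by simpa using hi⟩
  conv_lhs => rw [← List.take_append_drop i w, ← List.take_append_drop p.length (w.drop i)]
  rw [h, List.drop_drop, List.append_assoc]

theorem catalan_ne_zero (n : ℕ) : catalan n ≠ 0 := fun h =>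
  n.centralBinom_ne_zero (by rw [← succ_mul_catalan_eq_centralBinom, h, mul_zero])

theorem succ_mul_catalan_succ_eq_choose (m : ℕ) :
    (m + 1) * catalan (m + 1) = (2 * (m + 1)).choose m := by
  have hcentral : (m + 2) * catalan (m + 1) = (2 * (m + 1)).choose (m + 1) :=
    succ_mul_catalan_eq_centralBinom (m + 1)
  have hpascal := Nat.choose_succ_right_eq (2 * (m + 1)) m
  rw [show 2 * (m + 1) - m = m + 2 by omega, ← hcentral] at hpascal
  exact Nat.eq_of_mul_eq_mul_right (show 0 < m + 2 by omega) (by linarith)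

namespace CatalanWord

-- `(0 :: w).IsChain Step` is the Catalan-word condition on `w`; the prepended `0` forces `w₁ = 1`.
def Step (x y : ℕ) : Prop := 0 < y ∧ y ≤ x + 1

theorem isCatalanWord_iff_isChain {w : List ℕ} : IsCatalanWord w ↔ (0 :: w).IsChain Step := by
  rw [List.isChain_iff_getElem]
  constructor
  · rintro ⟨hpos, hhead, hstep⟩ (_ | i) hi
    · have := hhead (by simpa using hi)
      simp only [List.length_cons, List.getElem_cons_zero, List.getElem_cons_succ] at hi ⊢
      rw [List.getD_eq_getElem _ _ (by omega)] at this
      exact ⟨by omega, by omega⟩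
    · simp only [List.length_cons, List.getElem_cons_succ] at hi ⊢
      have := hstep i (by omega)
      rw [List.getD_eq_getElem _ _ (by omega), List.getD_eq_getElem _ _ (by omega)] at this
      exact ⟨hpos _ (List.getElem_mem _), this⟩
  · intro h
    refine ⟨fun x hx => ?_, fun hw => ?_, fun i hi => ?_⟩
    · obtain ⟨i, hi, rfl⟩ := List.getElem_of_mem hx
      have := (h i (by simpa using hi)).1
      simpa using this
    · have := h 0 (by simpa using hw)
      simp only [List.getElem_cons_zero, List.getElem_cons_succ, Step] at this
      rw [List.getD_eq_getElem _ _ hw]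
      omega
    · have := (h (i + 1) (by simpa using hi)).2
      rw [List.getD_eq_getElem _ _ hi, List.getD_eq_getElem _ _ (by omega)]
      simpa using this

theorem pos_of_mem_of_isChain {b x : ℕ} {w : List ℕ} (h : (b :: w).IsChain Step) (hx : x ∈ w) :
    0 < x := by
  induction w generalizing b with
  | nil => simp at hx
  | cons y w ih =>
    rw [List.isChain_cons_cons] at h
    rcases List.mem_cons.1 hx with rfl | hx
    exacts [h.1.1, ih h.2 hx]

theorem eq_one_of_isChain_zero_cons {x : ℕ} {w : List ℕ} (h : (0 :: x :: w).IsChain Step) :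
    x = 1 := by
  have := (List.isChain_cons_cons.1 h).1
  unfold Step at this
  omega

theorem isChain_succ_cons_map_succ {b : ℕ} {u : List ℕ} (h : (b :: u).IsChain Step) :
    ((b + 1) :: u.map (· + 1)).IsChain Step :=
  (List.isChain_map (· + 1) (l := b :: u)).2
    (h.imp fun _ _ hxy => ⟨by omega, by unfold Step at hxy; omega⟩)

theorem isChain_one_cons_map_succ_append {u v : List ℕ} (hu : (0 :: u).IsChain Step)
    (hv : (0 :: v).IsChain Step) : (0 :: 1 :: (u.map (· + 1) ++ v)).IsChain Step := by
  rw [← List.cons_append, ← List.cons_append]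
  refine (List.isChain_cons_cons.2 ⟨⟨one_pos, le_rfl⟩, isChain_succ_cons_map_succ hu⟩).append
    hv.tail fun x _ y hy => ?_
  cases v with
  | nil => simp at hy
  | cons z v =>
    obtain rfl : z = y := by simpa using hy
    rw [eq_one_of_isChain_zero_cons hv]
    exact ⟨one_pos, by omega⟩

theorem exists_eq_map_succ_append {b : ℕ} {t : List ℕ} (h : ((b + 1) :: t).IsChain Step) :
    ∃ u v, t = u.map (· + 1) ++ v ∧ (b :: u).IsChain Step ∧ (0 :: v).IsChain Step := by
  induction t generalizing b with
  | nil => exact ⟨[], [], rfl, .singleton b, .singleton 0⟩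
  | cons x t ih =>
    obtain ⟨⟨hx0, hxb⟩, ht⟩ := List.isChain_cons_cons.1 h
    obtain rfl | ⟨c, rfl⟩ : x = 1 ∨ ∃ c, x = c + 2 := by
      rcases x with _ | _ | c <;> simp_all
    · exact ⟨[], 1 :: t, rfl, .singleton b, List.isChain_cons_cons.2 ⟨⟨one_pos, le_rfl⟩, ht⟩⟩
    · obtain ⟨u, v, rfl, hu, hv⟩ := ih ht
      exact ⟨(c + 1) :: u, v, rfl, List.isChain_cons_cons.2 ⟨⟨by omega, by omega⟩, hu⟩, hv⟩

theorem map_succ_append_inj {u u' v v' : List ℕ} (hu : (0 :: u).IsChain Step)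
    (hu' : (0 :: u').IsChain Step) (hv : (0 :: v).IsChain Step) (hv' : (0 :: v').IsChain Step)
    (h : u.map (· + 1) ++ v = u'.map (· + 1) ++ v') : u = u' ∧ v = v' := by
  have hprefix : ∀ {u v : List ℕ}, (0 :: u).IsChain Step → (0 :: v).IsChain Step →
      (u.map (· + 1) ++ v).takeWhile (· ≠ 1) = u.map (· + 1) := by
    intro u v hu hv
    rw [List.takeWhile_append_of_pos]
    · cases v with
      | nil => simp
      | cons x v => simp [eq_one_of_isChain_zero_cons hv]
    · simp only [List.mem_map]
      rintro _ ⟨x, hx, rfl⟩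
      have := pos_of_mem_of_isChain hu hx
      simp only [ne_eq, decide_eq_true_eq]
      omega
  have hmap : u.map (· + 1) = u'.map (· + 1) := by
    rw [← hprefix hu hv, ← hprefix hu' hv', h]
  obtain rfl := List.map_injective_iff.2 (add_left_injective 1) hmap
  exact ⟨rfl, List.append_cancel_left h⟩

def OfLength (n : ℕ) : Type := {w : List ℕ // (0 :: w).IsChain Step ∧ w.length = n}

def ofFirstReturn (n : ℕ) (x : Σ k : Fin (n + 1), OfLength k × OfLength (n - k)) :
    OfLength (n + 1) :=
  ⟨1 :: (x.2.1.1.map (· + 1) ++ x.2.2.1),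
    isChain_one_cons_map_succ_append x.2.1.2.1 x.2.2.2.1, by
    obtain ⟨k, ⟨u, -, hu⟩, ⟨v, -, hv⟩⟩ := x
    simp only [List.length_cons, List.length_append, List.length_map, hu, hv]
    omega⟩

theorem ofFirstReturn_bijective (n : ℕ) : Function.Bijective (ofFirstReturn n) := by
  constructor
  · rintro ⟨k, ⟨u, hu, hku⟩, ⟨v, hv, _⟩⟩ ⟨k', ⟨u', hu', hku'⟩, ⟨v', hv', _⟩⟩ h
    obtain ⟨rfl, rfl⟩ :=
      map_succ_append_inj hu hu' hv hv' (List.cons_injective (congrArg Subtype.val h))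
    obtain rfl : k = k' := Fin.ext (hku.symm.trans hku')
    rfl
  · rintro ⟨_ | ⟨x, t⟩, hw, hlen⟩
    · simp at hlen
    obtain rfl := eq_one_of_isChain_zero_cons hw
    obtain ⟨u, v, rfl, hu, hv⟩ := exists_eq_map_succ_append hw.tail
    simp only [List.length_cons, List.length_append, List.length_map] at hlen
    exact ⟨⟨⟨u.length, by omega⟩, ⟨u, hu, rfl⟩, ⟨v, hv, by simp; omega⟩⟩, rfl⟩

theorem card_ofLength (n : ℕ) : Nat.card (OfLength n) = catalan n := by
  induction n using Nat.strong_induction_on with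
  | _ n ih =>
    rcases n with _ | n
    · have : Unique (OfLength 0) :=
        ⟨⟨⟨[], .singleton 0, rfl⟩⟩, fun w => Subtype.ext (List.length_eq_zero_iff.1 w.2.2)⟩
      rw [Nat.card_unique, catalan_zero]
    have (k : Fin (n + 1)) : Finite (OfLength k) :=
      Nat.finite_of_card_ne_zero (by rw [ih k (by omega)]; exact catalan_ne_zero k)
    have (k : Fin (n + 1)) : Finite (OfLength (n - k)) :=
      Nat.finite_of_card_ne_zero (by rw [ih (n - k) (by omega)]; exact catalan_ne_zero _)
    rw [← Nat.card_eq_of_bijective _ (ofFirstReturn_bijective n), Nat.card_sigma, catalan_succ]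
    refine Finset.sum_congr rfl fun k _ => ?_
    rw [Nat.card_prod, ih k (by omega), ih (n - k) (by omega)]

theorem isChain_cons_replicate_append {a b : ℕ} (ℓ : ℕ) (ha : 0 < a) (hab : a ≤ b) :
    (b :: (List.replicate ℓ (a + 1) ++ [a])).IsChain Step := by
  induction ℓ generalizing b with
  | zero => exact List.isChain_pair.2 ⟨ha, by omega⟩
  | succ ℓ ih =>
    rw [List.replicate_succ, List.cons_append, List.isChain_cons_cons]
    exact ⟨⟨by omega, by omega⟩, ih (by omega)⟩

theorem isChain_insert_peak_iff {A C : List ℕ} {a b : ℕ} (ℓ : ℕ) (ha : 0 < a) :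
    (b :: (A ++ a :: (List.replicate ℓ (a + 1) ++ a :: C))).IsChain Step ↔
      (b :: (A ++ a :: C)).IsChain Step := by
  rw [List.isChain_cons_split, List.isChain_cons_split (l₁ := List.replicate ℓ (a + 1)),
    List.isChain_cons_split (l₁ := A) (l₂ := C)]
  simp only [isChain_cons_replicate_append ℓ ha le_rfl, true_and]

def PeakOccurrence (n ℓ : ℕ) : Type :=
  {p : List ℕ × ℕ × ℕ // IsCatalanWord p.1 ∧ p.1.length = n ∧ 1 ≤ p.2.2 ∧
    (p.1.drop p.2.1).take (ℓ + 2) = p.2.2 :: (List.replicate ℓ (p.2.2 + 1) ++ [p.2.2])}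

def insertPeak (m ℓ : ℕ) (x : OfLength m × Fin m) : PeakOccurrence (m + ℓ + 1) ℓ :=
  let u := x.1.1
  let i : ℕ := x.2
  have hi : i < u.length := x.1.2.2 ▸ x.2.2
  let a := u[i]
  ⟨(u.take i ++ a :: (List.replicate ℓ (a + 1) ++ a :: u.drop (i + 1)), i, a), by
    have hu : u = u.take i ++ a :: u.drop (i + 1) := by
      rw [List.getElem_cons_drop, List.take_append_drop]
    have ha : 0 < a := pos_of_mem_of_isChain x.1.2.1 (List.getElem_mem hi)
    refine ⟨?_, ?_, ha, ?_⟩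
    · rw [isCatalanWord_iff_isChain, isChain_insert_peak_iff ℓ ha, ← hu]
      exact x.1.2.1
    · simp only [List.length_append, List.length_take, List.length_cons, List.length_replicate,
        List.length_drop, u, x.1.2.2]
      omega
    · simp [List.take_append, hi.le]⟩

theorem insertPeak_bijective (m ℓ : ℕ) : Function.Bijective (insertPeak m ℓ) := by
  constructor
  · rintro ⟨⟨u, _, rfl⟩, i, hi⟩ ⟨⟨u', _, hlen⟩, i', _⟩ h
    have h := congrArg Subtype.val h
    simp only [insertPeak, Prod.mk.injEq] at h
    obtain ⟨hw, rfl, ha⟩ := h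
    obtain ⟨htake, hrest⟩ := List.append_inj hw (by simp; omega)
    rw [ha, List.cons_inj_right] at hrest
    have hdrop : u.drop (i + 1) = u'.drop (i + 1) :=
      List.cons_injective (List.append_cancel_left hrest)
    have hu : u = u' := by
      rw [← List.take_append_drop i u, ← List.take_append_drop i u', ← List.getElem_cons_drop hi,
        ← List.getElem_cons_drop (by omega : i < u'.length), htake, hdrop, ha]
    subst hu
    rfl
  · rintro ⟨⟨w, i, a⟩, hw, hlen, ha, hpat⟩
    dsimp only at hw hlen ha hpat
    obtain ⟨A, C, rfl, rfl⟩ := List.exists_eq_append_of_take_drop_eq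
      (p := a :: (List.replicate ℓ (a + 1) ++ [a])) (List.cons_ne_nil _ _) (by simpa using hpat)
    simp only [isCatalanWord_iff_isChain, List.append_assoc, List.cons_append,
      isChain_insert_peak_iff ℓ ha] at hw
    refine ⟨⟨⟨A ++ a :: C, hw, ?_⟩, A.length, ?_⟩, ?_⟩
    · simp at hlen ⊢; omega
    · simp at hlen ⊢; omega
    · apply Subtype.ext
      simp [insertPeak]

end CatalanWord

theorem total_symmetric_ell_peaks_general (n ℓ : ℕ) (hn : 3 ≤ n) (hl2 : ℓ ≤ n - 2) :
    Nat.card {p : List ℕ × ℕ × ℕ //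
        IsCatalanWord p.1 ∧ p.1.length = n ∧ 1 ≤ p.2.2 ∧
        (p.1.drop p.2.1).take (ℓ + 2) =
          p.2.2 :: (List.replicate ℓ (p.2.2 + 1) ++ [p.2.2])} =
      (2 * n - 2 * ℓ - 2).choose (n - ℓ - 2) := by
  obtain ⟨m, rfl⟩ : ∃ m, n = m + 1 + ℓ + 1 := ⟨n - ℓ - 2, by omega⟩
  have hcount : Nat.card (CatalanWord.PeakOccurrence (m + 1 + ℓ + 1) ℓ) =
      catalan (m + 1) * (m + 1) := by
    rw [← Nat.card_eq_of_bijective _ (CatalanWord.insertPeak_bijective (m + 1) ℓ), Nat.card_prod,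
      CatalanWord.card_ofLength, Nat.card_fin]
  rw [show 2 * (m + 1 + ℓ + 1) - 2 * ℓ - 2 = 2 * (m + 1) by omega,
    show m + 1 + ℓ + 1 - ℓ - 2 = m by omega, ← succ_mul_catalan_succ_eq_choose, mul_comm]
  exact hcount

/-- Total number of symmetric ℓ-peaks (occurrences of a string a, (a+1)^ℓ, a with
a ≥ 1, at some position i) over all Catalan words of length n. -/
theorem total_symmetric_ell_peaks (n ℓ : ℕ) (hn : 3 ≤ n) (hl1 : 1 ≤ ℓ) (hl2 : ℓ ≤ n - 2) :
    Nat.card {p : List ℕ × ℕ × ℕ //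
        IsCatalanWord p.1 ∧ p.1.length = n ∧ 1 ≤ p.2.2 ∧
        (p.1.drop p.2.1).take (ℓ + 2) =
          p.2.2 :: (List.replicate ℓ (p.2.2 + 1) ++ [p.2.2])} =
      (2 * n - 2 * ℓ - 2).choose (n - ℓ - 2) :=
  total_symmetric_ell_peaks_general n ℓ hn hl2
end

section
/- For n ≥ 3, the total number of symmetric peaks (over all ℓ ≥ 1) in all Catalan words of length n equals ∑_{k=0}^{n-3} C(2k+2, k). -/
/-!
Deleting the block `(a+1)^ℓ a` of a symmetric peak `a (a+1)^ℓ a` from a Catalan word of length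
`n` leaves a Catalan word of length `m = n - 1 - ℓ` with a marked letter `a`, and conversely the
block can be inserted after any letter of any Catalan word. Since there are `catalan m` Catalan
words of length `m`, the total is `∑ m * catalan m` over `1 ≤ m ≤ n - 2`, and
`(k + 1) * catalan (k + 1) = C(2k+2, k)`.

Catalan words of length `m` are counted through the chains of `CatalanStep` starting at a
height `v`: their number `c v m` satisfies the ballot recurrence, whose solution
`c v m * (m + v + 1) = (v + 1) * C(2m+v, m)` specialises at `v = 0` to the Catalan number.
-/

open Finset

def CatalanStep (x y : ℕ) : Prop := 0 < y ∧ y ≤ x + 1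

def chainsFrom (v : ℕ) : ℕ → Finset (List ℕ)
  | 0 => {[]}
  | m + 1 => (Icc 1 (v + 1)).biUnion fun b => (chainsFrom b m).image (b :: ·)

theorem mem_chainsFrom {v m : ℕ} {l : List ℕ} :
    l ∈ chainsFrom v m ↔ l.length = m ∧ List.IsChain CatalanStep (v :: l) := by
  induction m generalizing v l with
  | zero =>
    simp only [chainsFrom, mem_singleton, List.length_eq_zero_iff, iff_self_and]
    rintro rfl
    exact .singleton v
  | succ m ih =>
    cases l with
    | nil => simp [chainsFrom]
    | cons b l =>
      simp only [chainsFrom, mem_biUnion, mem_Icc, mem_image, ih, List.cons.injEq,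
        exists_eq_right_right, List.length_cons, Nat.add_right_cancel_iff,
        List.isChain_cons_cons, CatalanStep, Nat.one_le_iff_ne_zero, Nat.pos_iff_ne_zero]
      tauto

theorem card_chainsFrom_succ (v m : ℕ) :
    #(chainsFrom v (m + 1)) = ∑ b ∈ Icc 1 (v + 1), #(chainsFrom b m) := by
  rw [chainsFrom, card_biUnion]
  · exact sum_congr rfl fun b _ => card_image_of_injective _ List.cons_injective
  · intro b _ c _ hbc
    simp only [disjoint_left, mem_image]
    rintro _ ⟨l, _, rfl⟩ ⟨l', _, h⟩
    exact hbc (List.cons.inj h).1.symm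

theorem card_chainsFrom_zero_succ (m : ℕ) : #(chainsFrom 0 (m + 1)) = #(chainsFrom 1 m) := by
  simp [card_chainsFrom_succ]

theorem card_chainsFrom_succ_succ (v m : ℕ) :
    #(chainsFrom (v + 1) (m + 1)) = #(chainsFrom v (m + 1)) + #(chainsFrom (v + 2) m) := by
  simp only [card_chainsFrom_succ]
  exact sum_Icc_succ_top (by omega) _

theorem card_chainsFrom_mul (m v : ℕ) :
    #(chainsFrom v m) * (m + v + 1) = (v + 1) * (2 * m + v).choose m := by
  induction m generalizing v with
  | zero => simp [chainsFrom]
  | succ m ihm =>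
    induction v with
    | zero =>
      have hC : (2 * m + 2).choose (m + 1) = 2 * (2 * m + 1).choose m := by
        rw [Nat.choose_succ_succ', Nat.choose_symm_half]
        ring
      rw [card_chainsFrom_zero_succ, show 2 * (m + 1) + 0 = 2 * m + 2 by ring, hC]
      linear_combination ihm 1
    | succ v ihv =>
      have hR := Nat.choose_succ_right_eq (2 * m + v + 2) m
      rw [show 2 * m + v + 2 - m = m + v + 2 by omega] at hR
      have ihm := ihm (v + 2)
      rw [show 2 * m + (v + 2) = 2 * m + v + 2 by ring] at ihm
      rw [show 2 * (m + 1) + v = 2 * m + v + 2 by ring] at ihv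
      rw [card_chainsFrom_succ_succ, show 2 * (m + 1) + (v + 1) = 2 * m + v + 2 + 1 by ring,
        Nat.choose_succ_succ']
      apply Nat.eq_of_mul_eq_mul_right (show 0 < (m + 1) * (m + v + 2) by positivity)
      linear_combination (m + 1) * (m + v + 3) * ihv + (m + 1) * (m + v + 2) * ihm
        + (v + 1) * (m + v + 3) * hR - (v + 2) * (m + v + 2) * hR

theorem isCatalanWord_iff_isChain_s4 {w : List ℕ} :
    IsCatalanWord w ↔ List.IsChain CatalanStep (0 :: w) := by
  simp only [IsCatalanWord, List.isChain_iff_getElem, CatalanStep, List.length_cons,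
    List.forall_mem_iff_getElem]
  constructor
  · rintro ⟨hpos, hhead, hstep⟩ (_ | i) hi
    · have h0 : 0 < w.length := by omega
      have := hhead h0
      rw [List.getD_eq_getElem _ _ h0] at this
      simp [this]
    · have hi' : i + 1 < w.length := by omega
      have := hstep i hi'
      rw [List.getD_eq_getElem _ _ hi', List.getD_eq_getElem _ _ (by omega)] at this
      simp [this, hpos]
  · intro h
    refine ⟨fun i hi => (h i (by omega)).1, fun h0 => ?_, fun i hi => ?_⟩
    · have := h 0 (by omega)
      rw [List.getD_eq_getElem _ _ h0]
      simp only [zero_add, List.getElem_cons_succ, List.getElem_cons_zero] at this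
      omega
    · have := (h (i + 1) (by omega)).2
      rw [List.getD_eq_getElem _ _ hi, List.getD_eq_getElem _ _ (by omega)]
      simpa using this

theorem mem_chainsFrom_zero {m : ℕ} {u : List ℕ} :
    u ∈ chainsFrom 0 m ↔ u.length = m ∧ IsCatalanWord u := by
  rw [mem_chainsFrom, isCatalanWord_iff_isChain_s4]

theorem card_chainsFrom_zero (m : ℕ) : #(chainsFrom 0 m) = catalan m := by
  apply Nat.eq_of_mul_eq_mul_right (Nat.succ_pos m)
  rw [mul_comm (catalan m), succ_mul_catalan_eq_centralBinom, Nat.centralBinom_eq_two_mul_choose]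
  simpa using card_chainsFrom_mul m 0

theorem succ_mul_catalan_succ (k : ℕ) : (k + 1) * catalan (k + 1) = (2 * k + 2).choose k := by
  apply Nat.eq_of_mul_eq_mul_right (show 0 < k + 2 by omega)
  have hR := Nat.choose_succ_right_eq (2 * k + 2) k
  rw [show 2 * k + 2 - k = k + 2 by omega] at hR
  have hC := succ_mul_catalan_eq_centralBinom (k + 1)
  rw [Nat.centralBinom_eq_two_mul_choose, show 2 * (k + 1) = 2 * k + 2 by ring] at hC
  linear_combination (k + 1) * hC + hR

theorem isChain_catalanStep_replicate_append {a b : ℕ} (ha : 0 < a) (hab : a ≤ b) (ℓ : ℕ) :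
    List.IsChain CatalanStep (b :: (List.replicate ℓ (a + 1) ++ [a])) := by
  induction ℓ generalizing b with
  | zero => exact List.isChain_pair.mpr ⟨ha, by omega⟩
  | succ ℓ ih => exact List.isChain_cons_cons.mpr ⟨⟨by omega, by omega⟩, ih (by omega)⟩

theorem isChain_catalanStep_insert_peak_iff {a : ℕ} (ha : 0 < a) (ℓ : ℕ) (l₁ l₂ : List ℕ) :
    List.IsChain CatalanStep (l₁ ++ a :: (List.replicate ℓ (a + 1) ++ a :: l₂)) ↔
      List.IsChain CatalanStep (l₁ ++ a :: l₂) := by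
  rw [List.isChain_split, List.isChain_cons_split, List.isChain_split (l₂ := l₂)]
  simp only [isChain_catalanStep_replicate_append ha le_rfl, true_and]

theorem List.take_drop_eq_iff_exists_append {α : Type*} {w s : List α} {i : ℕ} (hs : s ≠ []) :
    (w.drop i).take s.length = s ↔ ∃ pre post, pre.length = i ∧ w = pre ++ s ++ post := by
  constructor
  · intro h
    have hi : i < w.length := by
      by_contra hi
      simp_all [List.drop_eq_nil_of_le (not_lt.mp hi)]
    refine ⟨w.take i, (w.drop i).drop s.length, by rw [List.length_take]; omega, ?_⟩
    conv_lhs => rw [← List.take_append_drop i w, ← List.take_append_drop s.length (w.drop i), h]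
    simp
  · rintro ⟨pre, post, rfl, rfl⟩
    simp

theorem List.exists_eq_append_cons_of_lt_length {α : Type*} {u : List α} {i : ℕ}
    (hi : i < u.length) : ∃ pre a post, pre.length = i ∧ u = pre ++ a :: post :=
  ⟨u.take i, u[i], u.drop (i + 1), by rw [List.length_take]; omega, by
    rw [← List.drop_eq_getElem_cons, List.take_append_drop]⟩

def insertPeak (ℓ i : ℕ) (u : List ℕ) : List ℕ :=
  u.take (i + 1) ++ List.replicate ℓ (u.getD i 0 + 1) ++ u.getD i 0 :: u.drop (i + 1)

theorem insertPeak_append_cons (ℓ a : ℕ) (pre post : List ℕ) :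
    insertPeak ℓ pre.length (pre ++ a :: post) =
      pre ++ a :: (List.replicate ℓ (a + 1) ++ a :: post) := by
  simp [insertPeak, List.take_append]

theorem length_insertPeak (ℓ i : ℕ) (u : List ℕ) (hi : i < u.length) :
    (insertPeak ℓ i u).length = u.length + ℓ + 1 := by
  simp only [insertPeak, List.length_append, List.length_take, List.length_replicate,
    List.length_cons, List.length_drop]
  omega

theorem take_append_drop_insertPeak (ℓ i : ℕ) (u : List ℕ) (hi : i < u.length) :
    (insertPeak ℓ i u).take (i + 1) ++ (insertPeak ℓ i u).drop (i + (ℓ + 2)) = u := by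
  obtain ⟨pre, a, post, rfl, rfl⟩ := List.exists_eq_append_cons_of_lt_length hi
  simp [insertPeak_append_cons, List.take_append, List.drop_append, List.drop_eq_nil_of_le]

theorem insertPeak_inj {ℓ i : ℕ} {u u' : List ℕ} (hu : i < u.length) (hu' : i < u'.length)
    (h : insertPeak ℓ i u = insertPeak ℓ i u') : u = u' := by
  rw [← take_append_drop_insertPeak ℓ i u hu, ← take_append_drop_insertPeak ℓ i u' hu', h]

theorem isCatalanWord_insert_peak_iff {a : ℕ} (ha : 0 < a) (ℓ : ℕ) (pre post : List ℕ) :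
    IsCatalanWord (pre ++ a :: (List.replicate ℓ (a + 1) ++ a :: post)) ↔
      IsCatalanWord (pre ++ a :: post) := by
  rw [isCatalanWord_iff_isChain_s4, isCatalanWord_iff_isChain_s4]
  exact isChain_catalanStep_insert_peak_iff ha ℓ (0 :: pre) post

theorem isCatalanWord_peak_iff {w : List ℕ} {i a ℓ : ℕ} :
    IsCatalanWord w ∧ 1 ≤ a ∧
        (w.drop i).take (ℓ + 2) = a :: (List.replicate ℓ (a + 1) ++ [a]) ↔
      ∃ u, IsCatalanWord u ∧ i < u.length ∧ u.getD i 0 = a ∧ w = insertPeak ℓ i u := by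
  have hlen : (a :: (List.replicate ℓ (a + 1) ++ [a])).length = ℓ + 2 := by simp
  rw [← hlen, List.take_drop_eq_iff_exists_append (List.cons_ne_nil _ _)]
  constructor
  · rintro ⟨hw, ha, pre, post, rfl, rfl⟩
    refine ⟨pre ++ a :: post, ?_, by simp, by simp, by simp [insertPeak_append_cons]⟩
    rw [← isCatalanWord_insert_peak_iff ha ℓ]
    simpa using hw
  · rintro ⟨u, hu, hi, hua, rfl⟩
    obtain ⟨pre, b, post, rfl, rfl⟩ := List.exists_eq_append_cons_of_lt_length hi
    obtain rfl : a = b := by simpa using hua.symm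
    have ha : 0 < a := hu.1 a (by simp)
    rw [insertPeak_append_cons]
    refine ⟨(isCatalanWord_insert_peak_iff ha ℓ pre post).mpr hu, ha, pre, post, rfl, ?_⟩
    simp

/-- `k + 1` is the length of the Catalan word left after deleting the block, so `ℓ = n - 2 - k`. -/
def symmetricPeaks (n : ℕ) : Finset (List ℕ × ℕ × ℕ × ℕ) :=
  (range (n - 2)).biUnion fun k => (range (k + 1) ×ˢ chainsFrom 0 (k + 1)).image
    fun p => (insertPeak (n - 2 - k) p.1 p.2, p.1, p.2.getD p.1 0, n - 2 - k)

theorem mem_symmetricPeaks {n : ℕ} {p : List ℕ × ℕ × ℕ × ℕ} :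
    p ∈ symmetricPeaks n ↔
      IsCatalanWord p.1 ∧ p.1.length = n ∧ 1 ≤ p.2.2.1 ∧ 1 ≤ p.2.2.2 ∧
        (p.1.drop p.2.1).take (p.2.2.2 + 2) =
          p.2.2.1 :: (List.replicate p.2.2.2 (p.2.2.1 + 1) ++ [p.2.2.1]) := by
  obtain ⟨w, i, a, ℓ⟩ := p
  simp only [symmetricPeaks, mem_biUnion, mem_image, mem_product, mem_range, Prod.exists,
    Prod.mk.injEq, mem_chainsFrom_zero]
  constructor
  · rintro ⟨k, hk, i, u, ⟨hi, hul, hu⟩, rfl, rfl, rfl, rfl⟩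
    obtain ⟨hw, ha, hpeak⟩ := isCatalanWord_peak_iff.mpr ⟨u, hu, hi.trans_eq hul.symm, rfl, rfl⟩
    exact ⟨hw, by rw [length_insertPeak _ _ _ (by omega)]; omega, ha, by omega, hpeak⟩
  · rintro ⟨hw, hn, ha, hℓ, hpeak⟩
    obtain ⟨u, hu, hi, rfl, rfl⟩ := isCatalanWord_peak_iff.mp ⟨hw, ha, hpeak⟩
    rw [length_insertPeak _ _ _ hi] at hn
    have hk : n - 2 - (u.length - 1) = ℓ := by omega
    exact ⟨u.length - 1, by omega, i, u, ⟨by omega, by omega, hu⟩, by simp [hk]⟩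

theorem card_symmetricPeaks (n : ℕ) :
    #(symmetricPeaks n) = ∑ k ∈ range (n - 2), (k + 1) * catalan (k + 1) := by
  rw [symmetricPeaks, card_biUnion]
  · refine sum_congr rfl fun k _ => ?_
    rw [card_image_of_injOn, card_product, card_range, card_chainsFrom_zero]
    rintro ⟨i, u⟩ hu ⟨i', u'⟩ hu' h
    simp only [coe_product, coe_range, Set.mem_prod, Set.mem_Iio, mem_coe,
      mem_chainsFrom_zero] at hu hu'
    simp only [Prod.mk.injEq] at h ⊢
    obtain ⟨hw, rfl, -⟩ := h
    exact ⟨rfl, insertPeak_inj (by omega) (by omega) hw⟩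
  · intro k hk k' hk' hkk'
    simp only [disjoint_left, mem_image]
    rintro _ ⟨_, _, rfl⟩ ⟨_, _, h⟩
    simp only [mem_coe, mem_range] at hk hk'
    exact hkk' (by simp only [Prod.mk.injEq] at h; omega)

theorem total_symmetric_peaks_general (n : ℕ) :
    Nat.card {p : List ℕ × ℕ × ℕ × ℕ //
        IsCatalanWord p.1 ∧ p.1.length = n ∧ 1 ≤ p.2.2.1 ∧ 1 ≤ p.2.2.2 ∧
        (p.1.drop p.2.1).take (p.2.2.2 + 2) =
          p.2.2.1 :: (List.replicate p.2.2.2 (p.2.2.1 + 1) ++ [p.2.2.1])} =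
      ∑ k ∈ Finset.range (n - 2), (2 * k + 2).choose k := by
  rw [Nat.card_congr (Equiv.subtypeEquivRight fun _ => mem_symmetricPeaks.symm),
    Nat.card_eq_finsetCard, card_symmetricPeaks]
  exact sum_congr rfl fun k _ => succ_mul_catalan_succ k

/-- Total number of symmetric peaks (occurrences of a string a, (a+1)^ℓ, a with
a ≥ 1, ℓ ≥ 1, at some position i) over all Catalan words of length n. -/
theorem total_symmetric_peaks (n : ℕ) (hn : 3 ≤ n) :
    Nat.card {p : List ℕ × ℕ × ℕ × ℕ //
        IsCatalanWord p.1 ∧ p.1.length = n ∧ 1 ≤ p.2.2.1 ∧ 1 ≤ p.2.2.2 ∧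
        (p.1.drop p.2.1).take (p.2.2.2 + 2) =
          p.2.2.1 :: (List.replicate p.2.2.2 (p.2.2.1 + 1) ++ [p.2.2.1])} =
      ∑ k ∈ Finset.range (n - 2), (2 * k + 2).choose k :=
  total_symmetric_peaks_general n
end

section
/- For n ≥ 1, the total number of runs of descents over all Catalan words of length n equals C(2n,n) − C(2n-2,n-1). -/
namespace CatRuns

def lastD (w : List ℕ) : ℕ := w.getD (w.length - 1) 0

def ext (S : Finset (List ℕ)) : Finset (List ℕ) :=
  S.biUnion (fun v => (Finset.Icc 1 (lastD v + 1)).image (fun k => v ++ [k]))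

def CW : ℕ → Finset (List ℕ)
  | 0 => {([] : List ℕ)}
  | n + 1 => ext (CW n)

lemma lastD_snoc (v : List ℕ) (k : ℕ) : lastD (v ++ [k]) = k := by
  unfold lastD
  rw [List.length_append]
  simp only [List.length_singleton, Nat.add_sub_cancel]
  rw [List.getD_append_right _ _ _ _ (le_refl _)]
  simp

lemma snoc_cat {v : List ℕ} (hv : IsCatalanWord v) {k : ℕ} (hk1 : 1 ≤ k)
    (hk2 : k ≤ lastD v + 1) : IsCatalanWord (v ++ [k]) := by
  obtain ⟨h1, h2, h3⟩ := hv
  refine ⟨?_, ?_, ?_⟩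
  · intro x hx
    rcases List.mem_append.1 hx with hx | hx
    · exact h1 x hx
    · simp only [List.mem_singleton] at hx; omega
  · intro _
    rcases eq_or_ne v [] with rfl | hne
    · have hk : k = 1 := by
        have : lastD ([] : List ℕ) = 0 := by simp [lastD]
        omega
      simp [hk]
    · have hl : 0 < v.length := List.length_pos_iff.2 hne
      rw [List.getD_append _ _ _ _ hl]
      exact h2 hl
  · intro i hi
    rw [List.length_append, List.length_singleton] at hi
    rcases lt_or_ge (i + 1) v.length with h | h
    · rw [List.getD_append _ _ _ _ h, List.getD_append _ _ _ _ (by omega)]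
      exact h3 i h
    · have hlen : i + 1 = v.length := by omega
      rw [List.getD_append _ _ _ _ (by omega : i < v.length)]
      rw [List.getD_append_right _ _ _ _ (by omega : v.length ≤ i + 1)]
      have : i + 1 - v.length = 0 := by omega
      rw [this]
      have : v.getD i 0 = lastD v := by unfold lastD; congr 1; omega
      rw [this]
      simpa using hk2

lemma cat_decomp {w : List ℕ} (hw : IsCatalanWord w) {n : ℕ} (hl : w.length = n + 1) :
    ∃ v k, IsCatalanWord v ∧ v.length = n ∧ 1 ≤ k ∧ k ≤ lastD v + 1 ∧ w = v ++ [k] := by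
  have hne : w ≠ [] := by intro h; rw [h] at hl; simp at hl
  refine ⟨w.dropLast, w.getLast hne, ?_, ?_, ?_, ?_, (List.dropLast_append_getLast hne).symm⟩
  · obtain ⟨h1, h2, h3⟩ := hw
    have hvl : w.dropLast.length = n := by rw [List.length_dropLast, hl]; rfl
    have hw' : w.dropLast ++ [w.getLast hne] = w := List.dropLast_append_getLast hne
    refine ⟨fun x hx => h1 x (List.dropLast_subset w hx), ?_, ?_⟩
    · intro h0
      rw [hvl] at h0
      have := h2 (by omega)
      rw [← hw', List.getD_append _ _ _ _ (by omega)] at this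
      exact this
    · intro i hi
      rw [hvl] at hi
      have := h3 i (by omega)
      rw [← hw', List.getD_append _ _ _ _ (by omega), List.getD_append _ _ _ _ (by omega)] at this
      exact this
  · rw [List.length_dropLast, hl]; rfl
  · exact hw.1 _ (List.getLast_mem hne)
  · have hvl : w.dropLast.length = n := by rw [List.length_dropLast, hl]; rfl
    have hw' : w.dropLast ++ [w.getLast hne] = w := List.dropLast_append_getLast hne
    rcases Nat.eq_zero_or_pos n with rfl | hn
    · have : lastD w.dropLast = 0 := by
        have : w.dropLast = [] := List.length_eq_zero_iff.1 hvl
        simp [this, lastD]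
      rw [this]
      have h2 := hw.2.1 (by omega)
      rw [← hw', List.getD_append_right _ _ _ _ (by omega : w.dropLast.length ≤ 0)] at h2
      simp only [hvl] at h2
      simp at h2
      omega
    · have h3 := hw.2.2 (n - 1) (by omega)
      have e1 : w.getD (n - 1 + 1) 0 = w.getLast hne := by
        have e : (w.dropLast ++ [w.getLast hne]).getD (n - 1 + 1) 0 = w.getLast hne := by
          rw [List.getD_append_right _ _ _ _ (by omega : w.dropLast.length ≤ n - 1 + 1), hvl]
          have h0 : n - 1 + 1 - n = 0 := by omega
          rw [h0]; simp
        rwa [hw'] at e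
      have e2 : w.getD (n - 1) 0 = lastD w.dropLast := by
        have e : (w.dropLast ++ [w.getLast hne]).getD (n - 1) 0 = lastD w.dropLast := by
          rw [List.getD_append _ _ _ _ (by omega : n - 1 < w.dropLast.length)]
          unfold lastD; rw [hvl]
        rwa [hw'] at e
      rw [e1, e2] at h3
      exact h3

lemma mem_CW {n : ℕ} {w : List ℕ} : w ∈ CW n ↔ IsCatalanWord w ∧ w.length = n := by
  induction n generalizing w with
  | zero =>
    simp only [CW, Finset.mem_singleton]
    constructor
    · rintro rfl
      exact ⟨⟨by simp, by simp, by simp⟩, rfl⟩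
    · rintro ⟨_, hl⟩
      exact List.length_eq_zero_iff.1 hl
  | succ n ih =>
    simp only [CW, ext, Finset.mem_biUnion, Finset.mem_image, Finset.mem_Icc]
    constructor
    · rintro ⟨v, hv, k, ⟨hk1, hk2⟩, rfl⟩
      obtain ⟨hvc, hvl⟩ := ih.1 hv
      exact ⟨snoc_cat hvc hk1 hk2, by simp [hvl]⟩
    · rintro ⟨hc, hl⟩
      obtain ⟨v, k, hvc, hvl, hk1, hk2, rfl⟩ := cat_decomp hc hl
      exact ⟨v, ih.2 ⟨hvc, hvl⟩, k, ⟨hk1, hk2⟩, rfl⟩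

def des (w : List ℕ) : ℕ :=
  ((Finset.range (w.length - 1)).filter (fun j => w.getD (j + 1) 0 < w.getD j 0)).card

def asc (w : List ℕ) : ℕ :=
  ((Finset.range (w.length - 1)).filter (fun j => w.getD j 0 ≤ w.getD (j + 1) 0)).card

lemma asc_add_des (w : List ℕ) : asc w + des w = w.length - 1 := by
  classical
  unfold asc des
  have h := Finset.card_filter_add_card_filter_not
    (s := Finset.range (w.length - 1)) (p := fun j => w.getD j 0 ≤ w.getD (j + 1) 0)
  simp only [not_le, Finset.card_range] at h
  exact h

lemma des_snoc (v : List ℕ) (hv : v ≠ []) (k : ℕ) :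
    des (v ++ [k]) = des v + (if k < lastD v then 1 else 0) := by
  have hl : 0 < v.length := List.length_pos_iff.2 hv
  unfold des
  have hlen : (v ++ [k]).length - 1 = v.length := by simp
  rw [hlen]
  have hsplit : Finset.range v.length = insert (v.length - 1) (Finset.range (v.length - 1)) := by
    conv_lhs => rw [show v.length = (v.length - 1) + 1 from by omega]
    exact Finset.range_add_one
  rw [hsplit, Finset.filter_insert]
  have hagree : ∀ j ∈ Finset.range (v.length - 1),
      ((v ++ [k]).getD (j + 1) 0 < (v ++ [k]).getD j 0) ↔ (v.getD (j + 1) 0 < v.getD j 0) := by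
    intro j hj
    rw [Finset.mem_range] at hj
    rw [List.getD_append _ _ _ _ (by omega), List.getD_append _ _ _ _ (by omega)]
  have hfilter_eq : (Finset.range (v.length - 1)).filter
      (fun j => (v ++ [k]).getD (j + 1) 0 < (v ++ [k]).getD j 0) =
      (Finset.range (v.length - 1)).filter (fun j => v.getD (j + 1) 0 < v.getD j 0) := by
    apply Finset.filter_congr
    intro j hj
    exact hagree j hj
  have hlast : ((v ++ [k]).getD (v.length - 1 + 1) 0 < (v ++ [k]).getD (v.length - 1) 0)
      ↔ (k < lastD v) := by
    rw [List.getD_append _ _ _ _ (by omega : v.length - 1 < v.length),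
      List.getD_append_right _ _ _ _ (by omega : v.length ≤ v.length - 1 + 1)]
    have h0 : v.length - 1 + 1 - v.length = 0 := by omega
    rw [h0]
    unfold lastD
    simp
  have hnotmem : v.length - 1 ∉ (Finset.range (v.length - 1)).filter
      (fun j => (v ++ [k]).getD (j + 1) 0 < (v ++ [k]).getD j 0) := by
    simp
  by_cases hcase : k < lastD v
  · rw [if_pos (hlast.2 hcase), if_pos hcase, Finset.card_insert_of_notMem hnotmem, hfilter_eq]
  · rw [if_neg (fun h => hcase (hlast.1 h)), if_neg hcase, hfilter_eq]
    simp

def SC (n k : ℕ) : ℕ := ((CW n).filter (fun w => k ≤ lastD w)).card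

def SD (n k : ℕ) : ℕ := ∑ w ∈ (CW n).filter (fun w => k ≤ lastD w), des w

def cN (n k : ℕ) : ℕ := ((CW n).filter (fun w => lastD w = k)).card

def dN (n k : ℕ) : ℕ := ∑ w ∈ (CW n).filter (fun w => lastD w = k), des w

lemma snoc_sum {M : Type*} [AddCommMonoid M] (n : ℕ) (g : List ℕ → M) :
    ∑ w ∈ CW (n + 1), g w = ∑ v ∈ CW n, ∑ k ∈ Finset.Icc 1 (lastD v + 1), g (v ++ [k]) := by
  show ∑ w ∈ ext (CW n), g w = _
  unfold ext
  rw [Finset.sum_biUnion]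
  · apply Finset.sum_congr rfl
    intro v _
    rw [Finset.sum_image]
    intro a _ b _ hab
    have := List.append_cancel_left hab
    simpa using this
  · intro v hv v' hv' hne
    simp only [Finset.disjoint_left, Finset.mem_image]
    rintro w ⟨k, hk, rfl⟩ ⟨k', hk', habs⟩
    exact hne ((List.append_inj_left' habs (by simp)).symm)

lemma getD_le {w : List ℕ} (hw : IsCatalanWord w) : ∀ i, w.getD i 0 ≤ i + 1 := by
  intro i
  induction i with
  | zero =>
    rcases Nat.eq_zero_or_pos w.length with h0 | h0
    · rw [List.getD_eq_default _ _ (by omega)]; omega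
    · rw [hw.2.1 h0]
  | succ i ih =>
    rcases lt_or_ge (i + 1) w.length with h | h
    · have := hw.2.2 i h
      omega
    · rw [List.getD_eq_default _ _ h]; omega

lemma lastD_le {n : ℕ} {w : List ℕ} (hw : w ∈ CW n) : lastD w ≤ n := by
  obtain ⟨hc, hl⟩ := mem_CW.1 hw
  rcases Nat.eq_zero_or_pos w.length with h0 | h0
  · unfold lastD
    rw [List.getD_eq_default _ _ (by omega)]
    omega
  · have := getD_le hc (w.length - 1)
    unfold lastD
    omega

lemma lastD_pos {n : ℕ} {w : List ℕ} (hw : w ∈ CW n) (hn : 1 ≤ n) : 1 ≤ lastD w := by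
  obtain ⟨hc, hl⟩ := mem_CW.1 hw
  have hlen : 0 < w.length := by omega
  have hmem : w.getD (w.length - 1) 0 ∈ w := by
    rw [List.getD_eq_getElem w 0 (by omega)]
    exact List.getElem_mem _
  exact hc.1 _ hmem

lemma ne_nil_of_mem {n : ℕ} {w : List ℕ} (hw : w ∈ CW n) (hn : 1 ≤ n) : w ≠ [] := by
  obtain ⟨_, hl⟩ := mem_CW.1 hw
  intro h; rw [h] at hl; simp at hl; omega

lemma SC_split (n k : ℕ) : SC n k = cN n k + SC n (k + 1) := by
  unfold SC cN
  have hpred : ∀ w ∈ CW n, (k ≤ lastD w) ↔ (lastD w = k ∨ k + 1 ≤ lastD w) := by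
    intro w _; omega
  rw [Finset.filter_congr hpred, Finset.filter_or, Finset.card_union_of_disjoint]
  rw [Finset.disjoint_filter]
  intro w _ h1; omega

lemma SD_split (n k : ℕ) : SD n k = dN n k + SD n (k + 1) := by
  unfold SD dN
  have hpred : ∀ w ∈ CW n, (k ≤ lastD w) ↔ (lastD w = k ∨ k + 1 ≤ lastD w) := by
    intro w _; omega
  rw [Finset.filter_congr hpred, Finset.filter_or, Finset.sum_union]
  rw [Finset.disjoint_filter]
  intro w _ h1; omega

lemma SC_vanish {n k : ℕ} (h : n < k) : SC n k = 0 := by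
  unfold SC
  rw [Finset.card_eq_zero, Finset.filter_eq_empty_iff]
  intro w hw
  have := lastD_le hw
  omega

lemma SD_vanish {n k : ℕ} (h : n < k) : SD n k = 0 := by
  unfold SD
  have : (CW n).filter (fun w => k ≤ lastD w) = ∅ := by
    rw [Finset.filter_eq_empty_iff]
    intro w hw
    have := lastD_le hw
    omega
  rw [this, Finset.sum_empty]

lemma SC_zero {n : ℕ} (hn : 1 ≤ n) : SC n 0 = SC n 1 := by
  unfold SC
  congr 1
  apply Finset.filter_congr
  intro w hw
  have := lastD_pos hw hn
  omega

lemma SD_zero {n : ℕ} (hn : 1 ≤ n) : SD n 0 = SD n 1 := by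
  unfold SD
  congr 1
  apply Finset.filter_congr
  intro w hw
  have := lastD_pos hw hn
  omega

lemma cN_rec (n k : ℕ) (hk : 1 ≤ k) : cN (n + 1) k = SC n (k - 1) := by
  unfold cN SC
  rw [Finset.card_filter, snoc_sum n (fun w => if lastD w = k then 1 else 0)]
  rw [Finset.card_filter]
  apply Finset.sum_congr rfl
  intro v _
  have : ∀ k' ∈ Finset.Icc 1 (lastD v + 1),
      (if lastD (v ++ [k']) = k then (1 : ℕ) else 0) = if k' = k then 1 else 0 := by
    intro k' _; rw [lastD_snoc]
  rw [Finset.sum_congr rfl this, Finset.sum_ite_eq']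
  simp only [Finset.mem_Icc]
  split_ifs with h1 h2 h2 <;> first | rfl | omega

lemma dN_rec (n k : ℕ) (hn : 1 ≤ n) (hk : 1 ≤ k) :
    dN (n + 1) k = SD n (k - 1) + SC n (k + 1) := by
  unfold dN SD SC
  rw [Finset.sum_filter, snoc_sum n (fun w => if lastD w = k then des w else 0)]
  rw [Finset.sum_filter, Finset.card_filter, ← Finset.sum_add_distrib]
  apply Finset.sum_congr rfl
  intro v hv
  have hvne : v ≠ [] := ne_nil_of_mem hv hn
  have : ∀ k' ∈ Finset.Icc 1 (lastD v + 1),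
      (if lastD (v ++ [k']) = k then des (v ++ [k']) else 0) =
      if k' = k then des v + (if k < lastD v then 1 else 0) else 0 := by
    intro k' hk'
    rw [lastD_snoc, des_snoc v hvne k']
    split_ifs with h1 h2 h2 <;> first | rfl | omega
  rw [Finset.sum_congr rfl this, Finset.sum_ite_eq']
  simp only [Finset.mem_Icc]
  split_ifs with h1 h2 h3 h2 h3 h3 <;> omega

lemma CW_one : CW 1 = {[1]} := by
  show ext {([] : List ℕ)} = {[1]}
  unfold ext
  rw [Finset.singleton_biUnion]
  rfl

lemma SC_one (k : ℕ) : SC 1 k = if k ≤ 1 then 1 else 0 := by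
  unfold SC
  rw [CW_one]
  by_cases h : k ≤ 1
  · rw [if_pos h, Finset.filter_singleton, if_pos]
    · rfl
    · show k ≤ lastD [1]
      have : lastD [1] = 1 := rfl
      omega
  · rw [if_neg h, Finset.filter_singleton, if_neg]
    · rfl
    · show ¬ k ≤ lastD [1]
      have : lastD [1] = 1 := rfl
      omega

lemma SD_one (k : ℕ) : SD 1 k = 0 := by
  unfold SD
  apply Finset.sum_eq_zero
  intro w hw
  rw [CW_one] at hw
  have hw' : w = [1] := by
    have := Finset.mem_of_mem_filter w hw
    simpa using this
  subst hw'
  rfl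

def SCf (n k : ℕ) : ℤ :=
  ((2 * n - k).choose n : ℤ) - ((2 * n - k).choose (n + 1) : ℤ)

def SDf (n k : ℕ) : ℤ :=
  (k : ℤ) * ((2 * n - k - 2).choose n : ℤ) + ((2 * n - k - 2).choose (n + 1) : ℤ)

lemma idSC (a N : ℕ) :
    (((a + 1).choose (N + 1) : ℤ) - (a + 1).choose (N + 2)) =
      ((a.choose N : ℤ) - a.choose (N + 1)) + ((a.choose (N + 1) : ℤ) - a.choose (N + 2)) := by
  have h1 : (a + 1).choose (N + 1) = a.choose N + a.choose (N + 1) := Nat.choose_succ_succ a N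
  have h2 : (a + 1).choose (N + 2) = a.choose (N + 1) + a.choose (N + 2) :=
    Nat.choose_succ_succ a (N + 1)
  push_cast [h1, h2]
  ring

lemma idSD (a N : ℕ) (K : ℤ) :
    K * ((a + 1).choose (N + 1) : ℤ) + ((a + 1).choose (N + 2) : ℤ) =
      ((K - 1) * (a.choose N : ℤ) + (a.choose (N + 1) : ℤ)) +
        ((a.choose N : ℤ) - (a.choose (N + 1) : ℤ)) +
        ((K + 1) * (a.choose (N + 1) : ℤ) + (a.choose (N + 2) : ℤ)) := by
  have h1 : (a + 1).choose (N + 1) = a.choose N + a.choose (N + 1) := Nat.choose_succ_succ a N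
  have h2 : (a + 1).choose (N + 2) = a.choose (N + 1) + a.choose (N + 2) :=
    Nat.choose_succ_succ a (N + 1)
  push_cast [h1, h2]
  ring

lemma main_dist : ∀ n, 1 ≤ n → ∀ k, ((SC n k : ℤ) = SCf n k) ∧ ((SD n k : ℤ) = SDf n k) := by
  intro n hn
  induction n, hn using Nat.le_induction with
  | base =>
    intro k
    constructor
    · rw [SC_one]
      unfold SCf
      match k with
      | 0 => norm_num
      | 1 => norm_num
      | (k + 2) =>
        rw [if_neg (by omega)]
        rw [show 2 * 1 - (k + 2) = 0 from by omega]
        simp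
    · rw [SD_one]
      unfold SDf
      rw [show 2 * 1 - k - 2 = 0 from by omega]
      simp
  | succ n hn IH =>
    have key : ∀ j k, n + 2 ≤ k + j →
        ((SC (n + 1) k : ℤ) = SCf (n + 1) k) ∧ ((SD (n + 1) k : ℤ) = SDf (n + 1) k) := by
      intro j
      induction j with
      | zero =>
        intro k hk
        constructor
        · rw [SC_vanish (by omega), SCf]
          rw [Nat.choose_eq_zero_of_lt (by omega), Nat.choose_eq_zero_of_lt (by omega)]
          simp
        · rw [SD_vanish (by omega), SDf]
          rw [Nat.choose_eq_zero_of_lt (by omega), Nat.choose_eq_zero_of_lt (by omega)]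
          simp
      | succ j ihj =>
        intro k hk
        by_cases hcase : n + 2 ≤ k + j
        · exact ihj k hcase
        · have hkj : k + j = n + 1 := by omega
          match k with
          | 0 =>
            have h1 := ihj 1 (by omega)
            constructor
            · rw [SC_zero (by omega), h1.1]
              unfold SCf
              rw [show 2 * (n + 1) - 1 = 2 * n + 1 from by omega,
                show 2 * (n + 1) - 0 = (2 * n + 1) + 1 from by omega]
              have p1 : (2 * n + 1 + 1).choose (n + 1) =
                  (2 * n + 1).choose n + (2 * n + 1).choose (n + 1) :=
                Nat.choose_succ_succ (2 * n + 1) n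
              have p2 : (2 * n + 1 + 1).choose (n + 2) =
                  (2 * n + 1).choose (n + 1) + (2 * n + 1).choose (n + 2) :=
                Nat.choose_succ_succ (2 * n + 1) (n + 1)
              have hsym : (2 * n + 1).choose n = (2 * n + 1).choose (n + 1) := by
                have := Nat.choose_symm (show n + 1 ≤ 2 * n + 1 by omega)
                rwa [show 2 * n + 1 - (n + 1) = n from by omega] at this
              push_cast [p1, p2, hsym]
              ring
            · rw [SD_zero (by omega), h1.2]
              unfold SDf
              rw [show 2 * (n + 1) - 1 - 2 = 2 * n - 1 from by omega,
                show 2 * (n + 1) - 0 - 2 = (2 * n - 1) + 1 from by omega]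
              have p1 : (2 * n - 1 + 1).choose (n + 2) =
                  (2 * n - 1).choose (n + 1) + (2 * n - 1).choose (n + 2) :=
                Nat.choose_succ_succ (2 * n - 1) (n + 1)
              push_cast [p1]
              ring
          | (kk + 1) =>
            -- K := kk+1, K + j = n+1
            have hK : kk + 1 + j = n + 1 := hkj
            have hIH1 := (IH kk).1
            have hIH2 := (IH kk).2
            have hSCn1 := (IH (kk + 2)).1
            have hup := ihj (kk + 2) (by omega)
            constructor
            · rw [SC_split (n + 1) (kk + 1), cN_rec n (kk + 1) (by omega)]
              rw [show kk + 1 - 1 = kk from by omega]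
              push_cast [hIH1, hup.1]
              unfold SCf
              rw [show 2 * n - kk = n + j from by omega,
                show 2 * (n + 1) - (kk + 2) = n + j from by omega,
                show 2 * (n + 1) - (kk + 1) = (n + j) + 1 from by omega]
              exact (idSC (n + j) n).symm
            · rw [SD_split (n + 1) (kk + 1), dN_rec n (kk + 1) hn (by omega)]
              rw [show kk + 1 - 1 = kk from by omega]
              push_cast [hIH2, hSCn1, hup.2]
              unfold SDf SCf
              by_cases hsmall : n + j < 2
              · -- n = 1, j = 0, kk = 1
                have hn1 : n = 1 := by omega
                have hj0 : j = 0 := by omega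
                have hkk : kk = 1 := by omega
                subst hn1; subst hj0; subst hkk
                norm_num
              · rw [show 2 * n - kk - 2 = (n + j - 2) from by omega,
                  show 2 * n - (kk + 2) = (n + j - 2) from by omega,
                  show 2 * (n + 1) - (kk + 2) - 2 = (n + j - 2) from by omega,
                  show 2 * (n + 1) - (kk + 1) - 2 = (n + j - 2) + 1 from by omega]
                have hcast : ((kk : ℤ)) = ((kk + 1 : ℕ) : ℤ) - 1 := by push_cast; ring
                have := idSD (n + j - 2) n ((kk + 1 : ℕ) : ℤ)
                push_cast at this ⊢
                linarith [this]
    intro k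
    exact key (n + 2) k (by omega)

def R (w : List ℕ) : Finset (ℕ × ℕ) :=
  (Finset.range w.length ×ˢ Finset.range w.length).filter (fun p =>
    p.1 ≤ p.2 ∧ (∀ t < p.2, p.1 ≤ t → w.getD (t + 1) 0 < w.getD t 0) ∧
    (p.1 = 0 ∨ w.getD (p.1 - 1) 0 ≤ w.getD p.1 0) ∧
    (p.2 = w.length - 1 ∨ w.getD p.2 0 ≤ w.getD (p.2 + 1) 0))

def goodJ (w : List ℕ) : Finset ℕ :=
  (Finset.range w.length).filter (fun j =>
    j = w.length - 1 ∨ w.getD j 0 ≤ w.getD (j + 1) 0)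

lemma mem_R {w : List ℕ} {p : ℕ × ℕ} : p ∈ R w ↔
    p.1 < w.length ∧ p.2 < w.length ∧ p.1 ≤ p.2 ∧
    (∀ t < p.2, p.1 ≤ t → w.getD (t + 1) 0 < w.getD t 0) ∧
    (p.1 = 0 ∨ w.getD (p.1 - 1) 0 ≤ w.getD p.1 0) ∧
    (p.2 = w.length - 1 ∨ w.getD p.2 0 ≤ w.getD (p.2 + 1) 0) := by
  unfold R
  rw [Finset.mem_filter, Finset.mem_product, Finset.mem_range, Finset.mem_range]
  tauto

lemma card_R {w : List ℕ} (hw : 0 < w.length) : (R w).card = asc w + 1 := by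
  have hcard : (R w).card = (goodJ w).card := by
    apply Finset.card_bij (fun p _ => p.2)
    · intro p hp
      rw [mem_R] at hp
      unfold goodJ
      rw [Finset.mem_filter, Finset.mem_range]
      exact ⟨hp.2.1, hp.2.2.2.2.2⟩
    · intro p hp q hq heq
      rw [mem_R] at hp hq
      have aux : ∀ a b : ℕ × ℕ, a.2 = b.2 →
          (a.1 < a.2 + 1 ∧ (∀ t < a.2, a.1 ≤ t → w.getD (t + 1) 0 < w.getD t 0)) →
          (b.1 = 0 ∨ w.getD (b.1 - 1) 0 ≤ w.getD b.1 0) → b.1 ≤ b.2 → a.1 < b.1 → False := by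
        intro a b hab ⟨_, hrun⟩ hstart hble hlt
        have hb1 : 1 ≤ b.1 := by omega
        rcases hstart with h0 | hle
        · omega
        · have := hrun (b.1 - 1) (by omega) (by omega)
          rw [show b.1 - 1 + 1 = b.1 from by omega] at this
          omega
      rcases lt_trichotomy p.1 q.1 with h | h | h
      · exact absurd (aux p q heq ⟨by omega, hp.2.2.2.1⟩ hq.2.2.2.2.1 hq.2.2.1 h) (fun h => h)
      · exact Prod.ext h heq
      · exact absurd (aux q p heq.symm ⟨by omega, hq.2.2.2.1⟩ hp.2.2.2.2.1 hp.2.2.1 h)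
          (fun h => h)
    · intro j hj
      unfold goodJ at hj
      rw [Finset.mem_filter, Finset.mem_range] at hj
      obtain ⟨hjlen, hjcond⟩ := hj
      have hex : ∃ m, m ≤ j ∧ ∀ t < j, m ≤ t → w.getD (t + 1) 0 < w.getD t 0 :=
        ⟨j, le_rfl, fun t ht hmt => by omega⟩
      classical
      let i := Nat.find hex
      have hi := Nat.find_spec hex
      have hstart : i = 0 ∨ w.getD (i - 1) 0 ≤ w.getD i 0 := by
        rcases Nat.eq_zero_or_pos i with h0 | h0
        · exact Or.inl h0
        · right
          have hmin := Nat.find_min hex (show i - 1 < i from by omega)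
          push_neg at hmin
          obtain ⟨t, ht, hit, hcontra⟩ := hmin (by omega)
          have hti : t = i - 1 := by
            by_contra hne
            have hit' : i ≤ t := by omega
            have := hi.2 t ht hit'
            omega
          subst hti
          rw [show i - 1 + 1 = i from by omega] at hcontra
          omega
      refine ⟨(i, j), ?_, rfl⟩
      rw [mem_R]
      exact ⟨by omega, hjlen, hi.1, hi.2, hstart, hjcond⟩
  rw [hcard]
  have hins : goodJ w = insert (w.length - 1)
      ((Finset.range (w.length - 1)).filter (fun j => w.getD j 0 ≤ w.getD (j + 1) 0)) := by
    ext j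
    unfold goodJ
    rw [Finset.mem_insert, Finset.mem_filter, Finset.mem_filter, Finset.mem_range,
      Finset.mem_range]
    constructor
    · rintro ⟨hjr, hj⟩
      rcases hj with h | h
      · exact Or.inl h
      · by_cases hje : j = w.length - 1
        · exact Or.inl hje
        · exact Or.inr ⟨by omega, h⟩
    · rintro (h | ⟨h1, h2⟩)
      · exact ⟨by omega, Or.inl h⟩
      · exact ⟨by omega, Or.inr h2⟩
  rw [hins, Finset.card_insert_of_notMem (by simp)]
  rfl

lemma SC_full (n : ℕ) : SC n 0 = (CW n).card := by
  unfold SC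
  congr 1
  apply Finset.filter_true_of_mem
  intro w _
  exact Nat.zero_le _

lemma SD_full (n : ℕ) : SD n 0 = ∑ w ∈ CW n, des w := by
  unfold SD
  congr 1
  apply Finset.filter_true_of_mem
  intro w _
  exact Nat.zero_le _

lemma idFinal (M : ℕ) :
    ((M : ℤ) + 1) * (((2 * M + 2).choose (M + 1) : ℤ) - ((2 * M + 2).choose (M + 2) : ℤ)) -
      ((2 * M).choose (M + 2) : ℤ) =
    ((2 * M + 2).choose (M + 1) : ℤ) - ((2 * M).choose M : ℤ) := by
  have habs : (2 * M + 2).choose (M + 2) * (M + 2) = (2 * M + 2).choose (M + 1) * (M + 1) := by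
    have := Nat.choose_succ_right_eq (2 * M + 2) (M + 1)
    rwa [show 2 * M + 2 - (M + 1) = M + 1 from by omega] at this
  have p1 : (2 * M + 2).choose (M + 1) = (2 * M + 1).choose M + (2 * M + 1).choose (M + 1) :=
    Nat.choose_succ_succ (2 * M + 1) M
  have p2 : (2 * M + 2).choose (M + 2) =
      (2 * M + 1).choose (M + 1) + (2 * M + 1).choose (M + 2) :=
    Nat.choose_succ_succ (2 * M + 1) (M + 1)
  have p3 : (2 * M + 1).choose (M + 1) = (2 * M).choose M + (2 * M).choose (M + 1) :=
    Nat.choose_succ_succ (2 * M) M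
  have p4 : (2 * M + 1).choose (M + 2) = (2 * M).choose (M + 1) + (2 * M).choose (M + 2) :=
    Nat.choose_succ_succ (2 * M) (M + 1)
  have sym1 : (2 * M + 1).choose M = (2 * M + 1).choose (M + 1) := by
    have := Nat.choose_symm (show M + 1 ≤ 2 * M + 1 by omega)
    rwa [show 2 * M + 1 - (M + 1) = M from by omega] at this
  have habsZ : ((2 * M + 2).choose (M + 2) : ℤ) * ((M : ℤ) + 2) =
      ((2 * M + 2).choose (M + 1) : ℤ) * ((M : ℤ) + 1) := by exact_mod_cast habs
  have p1Z : ((2 * M + 2).choose (M + 1) : ℤ) =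
      ((2 * M + 1).choose M : ℤ) + ((2 * M + 1).choose (M + 1) : ℤ) := by exact_mod_cast p1
  have p2Z : ((2 * M + 2).choose (M + 2) : ℤ) =
      ((2 * M + 1).choose (M + 1) : ℤ) + ((2 * M + 1).choose (M + 2) : ℤ) := by exact_mod_cast p2
  have p3Z : ((2 * M + 1).choose (M + 1) : ℤ) =
      ((2 * M).choose M : ℤ) + ((2 * M).choose (M + 1) : ℤ) := by exact_mod_cast p3
  have p4Z : ((2 * M + 1).choose (M + 2) : ℤ) =
      ((2 * M).choose (M + 1) : ℤ) + ((2 * M).choose (M + 2) : ℤ) := by exact_mod_cast p4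
  have sym1Z : ((2 * M + 1).choose M : ℤ) = ((2 * M + 1).choose (M + 1) : ℤ) := by
    exact_mod_cast sym1
  linear_combination (-1 : ℤ) * habsZ + p2Z - p1Z + p4Z - sym1Z - p3Z

end CatRuns

open CatRuns

/-- Total number of runs of descents (maximal strictly decreasing consecutive
substrings, recorded by their start-end index pairs) over all Catalan words
of length n. -/
theorem total_runs_of_descents (n : ℕ) (hn : 1 ≤ n) :
    Nat.card {p : List ℕ × ℕ × ℕ //
        IsCatalanWord p.1 ∧ p.1.length = n ∧
        p.2.1 ≤ p.2.2 ∧ p.2.2 < n ∧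
        (∀ t, p.2.1 ≤ t → t < p.2.2 → p.1.getD (t + 1) 0 < p.1.getD t 0) ∧
        (p.2.1 = 0 ∨ p.1.getD (p.2.1 - 1) 0 ≤ p.1.getD p.2.1 0) ∧
        (p.2.2 = n - 1 ∨ p.1.getD p.2.2 0 ≤ p.1.getD (p.2.2 + 1) 0)} =
      (2 * n).choose n - (2 * n - 2).choose (n - 1) := by
  classical
  set T : Finset (List ℕ × ℕ × ℕ) :=
    (CW n).biUnion (fun w => (R w).image (fun q => (w, q))) with hT
  have hset : {p : List ℕ × ℕ × ℕ |
      IsCatalanWord p.1 ∧ p.1.length = n ∧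
      p.2.1 ≤ p.2.2 ∧ p.2.2 < n ∧
      (∀ t, p.2.1 ≤ t → t < p.2.2 → p.1.getD (t + 1) 0 < p.1.getD t 0) ∧
      (p.2.1 = 0 ∨ p.1.getD (p.2.1 - 1) 0 ≤ p.1.getD p.2.1 0) ∧
      (p.2.2 = n - 1 ∨ p.1.getD p.2.2 0 ≤ p.1.getD (p.2.2 + 1) 0)} = ↑T := by
    ext p
    simp only [Set.mem_setOf_eq, Finset.mem_coe, hT, Finset.mem_biUnion, Finset.mem_image]
    constructor
    · rintro ⟨hcat, hlen, hij, hjn, hrun, hstart, hend⟩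
      refine ⟨p.1, mem_CW.2 ⟨hcat, hlen⟩, p.2, ?_, ?_⟩
      · rw [mem_R, hlen]
        exact ⟨by omega, hjn, hij, fun t ht h2 => hrun t h2 ht, hstart, hend⟩
      · exact Prod.mk.eta
    · rintro ⟨w, hw, q, hq, rfl⟩
      obtain ⟨hcat, hlen⟩ := mem_CW.1 hw
      rw [mem_R, hlen] at hq
      exact ⟨hcat, hlen, hq.2.2.1, hq.2.1, fun t h2 ht => hq.2.2.2.1 t ht h2,
        hq.2.2.2.2.1, hq.2.2.2.2.2⟩
  have hcard : Nat.card {p : List ℕ × ℕ × ℕ //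
      IsCatalanWord p.1 ∧ p.1.length = n ∧
      p.2.1 ≤ p.2.2 ∧ p.2.2 < n ∧
      (∀ t, p.2.1 ≤ t → t < p.2.2 → p.1.getD (t + 1) 0 < p.1.getD t 0) ∧
      (p.2.1 = 0 ∨ p.1.getD (p.2.1 - 1) 0 ≤ p.1.getD p.2.1 0) ∧
      (p.2.2 = n - 1 ∨ p.1.getD p.2.2 0 ≤ p.1.getD (p.2.2 + 1) 0)} = T.card := by
    rw [show Nat.card {p : List ℕ × ℕ × ℕ //
      IsCatalanWord p.1 ∧ p.1.length = n ∧
      p.2.1 ≤ p.2.2 ∧ p.2.2 < n ∧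
      (∀ t, p.2.1 ≤ t → t < p.2.2 → p.1.getD (t + 1) 0 < p.1.getD t 0) ∧
      (p.2.1 = 0 ∨ p.1.getD (p.2.1 - 1) 0 ≤ p.1.getD p.2.1 0) ∧
      (p.2.2 = n - 1 ∨ p.1.getD p.2.2 0 ≤ p.1.getD (p.2.2 + 1) 0)} =
      ({p : List ℕ × ℕ × ℕ |
      IsCatalanWord p.1 ∧ p.1.length = n ∧
      p.2.1 ≤ p.2.2 ∧ p.2.2 < n ∧
      (∀ t, p.2.1 ≤ t → t < p.2.2 → p.1.getD (t + 1) 0 < p.1.getD t 0) ∧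
      (p.2.1 = 0 ∨ p.1.getD (p.2.1 - 1) 0 ≤ p.1.getD p.2.1 0) ∧
      (p.2.2 = n - 1 ∨ p.1.getD p.2.2 0 ≤ p.1.getD (p.2.2 + 1) 0)} : Set _).ncard
      from Nat.card_coe_set_eq _]
    rw [hset, Set.ncard_coe_finset]
  rw [hcard]
  -- card T = sum of asc+1
  have hTcard : T.card = ∑ w ∈ CW n, (asc w + 1) := by
    rw [hT, Finset.card_biUnion]
    · apply Finset.sum_congr rfl
      intro w hw
      rw [Finset.card_image_of_injective _ (fun a b hab => by simpa using hab)]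
      obtain ⟨_, hlen⟩ := mem_CW.1 hw
      exact card_R (by omega)
    · intro x hx y hy hxy
      simp only [Finset.disjoint_left, Finset.mem_image]
      rintro p ⟨q, hq, rfl⟩ ⟨q', hq', habs⟩
      exact hxy (congrArg Prod.fst habs).symm
  rw [hTcard]
  -- main counting
  have hndes : ∀ w ∈ CW n, asc w + 1 + des w = n := by
    intro w hw
    obtain ⟨_, hlen⟩ := mem_CW.1 hw
    have := asc_add_des w
    omega
  have hsum : (∑ w ∈ CW n, (asc w + 1)) + SD n 0 = n * (CW n).card := by
    rw [SD_full, ← Finset.sum_add_distrib]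
    rw [Finset.sum_congr rfl hndes, Finset.sum_const, smul_eq_mul, mul_comm]
  have hSC := (main_dist n hn 0).1
  have hSD := (main_dist n hn 0).2
  rw [SC_full] at hSC
  unfold SCf at hSC
  unfold SDf at hSD
  rw [Nat.sub_zero] at hSC hSD
  simp only [Nat.cast_zero, zero_mul, zero_add] at hSD
  -- final integer computation
  obtain ⟨M, rfl⟩ : ∃ M, n = M + 1 := ⟨n - 1, by omega⟩
  have e1 : 2 * (M + 1) = 2 * M + 2 := by ring
  have e2 : 2 * (M + 1) - 2 = 2 * M := by omega
  rw [e2] at hSD ⊢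
  rw [e1] at hSC ⊢
  have hfinal : ((∑ w ∈ CW (M + 1), (asc w + 1) : ℕ) : ℤ) =
      ((2 * M + 2).choose (M + 1) : ℤ) - ((2 * M).choose M : ℤ) := by
    have hs : ((∑ w ∈ CW (M + 1), (asc w + 1) : ℕ) : ℤ) =
        ((M : ℤ) + 1) * ((CW (M + 1)).card : ℤ) - (SD (M + 1) 0 : ℤ) := by
      have := congrArg (fun x : ℕ => (x : ℤ)) hsum
      push_cast at this ⊢
      linarith
    rw [hs, hSC, hSD]
    rw [show (M + 1) + 1 = M + 2 from rfl]
    exact idFinal M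
  have hle : (2 * M).choose ((M + 1) - 1) ≤ (2 * M + 2).choose (M + 1) := by
    rw [show (M + 1) - 1 = M from rfl]
    calc (2 * M).choose M ≤ (2 * M + 2).choose M := Nat.choose_le_choose M (by omega)
      _ ≤ (2 * M + 2).choose ((2 * M + 2) / 2) := Nat.choose_le_middle M (2 * M + 2)
      _ = (2 * M + 2).choose (M + 1) := by congr 1; omega
  rw [show (M + 1) - 1 = M from rfl] at hle ⊢
  omega
end

section
/- For n ≥ 2, ∑_{j=0}^{n-2k-1} C(n-j-1, k)·C(n-j-k-1, k)·C(n-1, j) = C(n-1,k)·C(n-k-1,k)·2^{n-2k-1} for all 0 ≤ k ≤ ⌊(n-1)/2⌋. -/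
/-!
Each summand factors as `C(n-1,k) C(n-k-1,k) C(n-2k-1,j)` by applying the trinomial revision
`C(m,j) C(m-j,k) = C(m,k) C(m-k,j)` twice, so the sum collapses to the row sum
`∑ j, C(n-2k-1,j) = 2^(n-2k-1)`.
-/

open Finset

namespace Nat

theorem choose_mul_choose_sub_comm (n j k : ℕ) :
    n.choose j * (n - j).choose k = n.choose k * (n - k).choose j := by
  by_cases h : j + k ≤ n
  · have hj := choose_mul (n := n) (le_add_right j k)
    have hk := choose_mul (n := n) (le_add_left k j)
    rw [Nat.add_sub_cancel_left] at hj
    rw [Nat.add_sub_cancel] at hk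
    rw [← hj, ← hk, choose_symm_add]
  · have hl : n.choose j * (n - j).choose k = 0 := by
      rcases le_or_gt j n with hjn | hjn
      · rw [choose_eq_zero_of_lt (n := n - j) (by omega), mul_zero]
      · rw [choose_eq_zero_of_lt hjn, zero_mul]
    have hr : n.choose k * (n - k).choose j = 0 := by
      rcases le_or_gt k n with hkn | hkn
      · rw [choose_eq_zero_of_lt (n := n - k) (by omega), mul_zero]
      · rw [choose_eq_zero_of_lt hkn, zero_mul]
    rw [hl, hr]

theorem choose_sub_mul_choose_sub_sub_mul_choose (m j k : ℕ) :
    (m - j).choose k * (m - j - k).choose k * m.choose j =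
      m.choose k * (m - k).choose k * (m - 2 * k).choose j :=
  calc (m - j).choose k * (m - j - k).choose k * m.choose j
      = m.choose j * (m - j).choose k * (m - k - j).choose k := by
        rw [Nat.sub_right_comm m j k]; ring
    _ = m.choose k * ((m - k).choose j * (m - k - j).choose k) := by
        rw [choose_mul_choose_sub_comm m j k]; ring
    _ = m.choose k * (m - k).choose k * (m - 2 * k).choose j := by
        rw [choose_mul_choose_sub_comm, Nat.sub_sub, ← two_mul]; ring

end Nat

theorem binomial_identity (n k : ℕ) (hn : 2 ≤ n) (hk : k ≤ (n - 1) / 2) :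
    ∑ j ∈ Finset.range (n - 2 * k),
        (n - j - 1).choose k * (n - j - k - 1).choose k * (n - 1).choose j =
      (n - 1).choose k * (n - k - 1).choose k * 2 ^ (n - 2 * k - 1) := by
  have hrange : n - 2 * k = n - 1 - 2 * k + 1 := by omega
  have hsub (j : ℕ) : n - j - k - 1 = n - 1 - j - k := by omega
  simp only [hsub, Nat.sub_right_comm n _ 1, Nat.choose_sub_mul_choose_sub_sub_mul_choose]
  rw [hrange, ← mul_sum, Nat.sum_range_choose]
end

section
/- For every Catalan word π of length n, the semi-perimeter of its bargraph equals n + 1 + asc(π), where asc(π) is the number of ascents of π. -/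
/-- The perimeter of the bargraph of a word: 2·(length) horizontal edge length
(bottom plus top) plus the vertical edge lengths: the first column height, the
last column height, and the absolute differences of consecutive heights. -/
def bargraphPerimeter (w : List ℕ) : ℕ :=
  2 * w.length + w.getD 0 0 + w.getD (w.length - 1) 0 +
    ∑ i ∈ Finset.range (w.length - 1), Nat.dist (w.getD i 0) (w.getD (i + 1) 0)

open Finset

lemma sum_range_dist_add_eq (g : ℕ → ℕ) (m : ℕ) :
    ∑ i ∈ range m, Nat.dist (g i) (g (i + 1)) + g m =
      2 * ∑ i ∈ range m, (g (i + 1) - g i) + g 0 := by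
  induction m with
  | zero => simp
  | succ m ih =>
    rw [sum_range_succ, sum_range_succ, Nat.dist]
    omega

lemma sum_range_tsub_eq_card_filter_lt {g : ℕ → ℕ} {m : ℕ}
    (hstep : ∀ i < m, g (i + 1) ≤ g i + 1) :
    ∑ i ∈ range m, (g (i + 1) - g i) = #{i ∈ range m | g i < g (i + 1)} := by
  rw [card_filter]
  refine sum_congr rfl fun i hi => ?_
  have := hstep i (mem_range.mp hi)
  split_ifs <;> omega

lemma natCard_succ_lt_and_eq_card_filter (p : ℕ → Prop) [DecidablePred p] (n : ℕ) :
    Nat.card {i : ℕ // i + 1 < n ∧ p i} = #{i ∈ range (n - 1) | p i} := by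
  rw [← Nat.card_eq_finsetCard]
  exact Nat.card_congr (Equiv.subtypeEquivRight fun i => by simp; omega)

lemma bargraphPerimeter_eq (w : List ℕ) :
    bargraphPerimeter w = 2 * (w.length + w.getD 0 0 +
      ∑ i ∈ range (w.length - 1), (w.getD (i + 1) 0 - w.getD i 0)) := by
  have := sum_range_dist_add_eq (fun i => w.getD i 0) (w.length - 1)
  unfold bargraphPerimeter
  omega

/-- The semi-perimeter of the bargraph of a Catalan word of length n ≥ 1 equals
n + 1 plus its number of ascents. -/
theorem semiperimeter_eq (n : ℕ) (hn : 1 ≤ n) (w : List ℕ)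
    (hw : IsCatalanWord w) (hl : w.length = n) :
    bargraphPerimeter w / 2 =
      n + 1 + Nat.card {i : ℕ // i + 1 < n ∧ w.getD i 0 < w.getD (i + 1) 0} := by
  obtain ⟨-, hfirst, hstep⟩ := hw
  subst hl
  have hrise := sum_range_tsub_eq_card_filter_lt (g := fun i => w.getD i 0)
    (m := w.length - 1) fun i hi => hstep i (by omega)
  rw [bargraphPerimeter_eq, hfirst (by omega), hrise, natCard_succ_lt_and_eq_card_filter]
  omega
end
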